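/- arXiv:2006.13429 — 8 statements merged into one kernel-verified Lean document; each statement's English description precedes it below -/
import Mathlib

section
/- Let d ≥ 1, β > 0, μ ∈ ℝ^d, and C ∈ ℝ^{d×d}, and suppose q₁,…,q_d ∈ ℝ^d satisfy Σ_{i=1}^d q_i q_iᵀ = C. Define the SUT σ-points σ₀ = μ, σ_i = μ + β q_i for i = 1,…,d, σ_i = μ − β q_{i−d} for i = d+1,…,2d, and weights w₀ = 1 − d/β², w_i = 1/(2β²) for i = 1,…,2d. Then for every matrix A ∈ ℝ^{d×d}, vector b ∈ ℝ^d, and scalar c ∈ ℝ, the quadratic polynomial q(x) = ⟨x, A x⟩ + ⟨b, x⟩ + c satisfies Σ_{i=0}^{2d} w_i q(σ_i) = trace(A C) + ⟨μ, A μ⟩ + ⟨b, μ⟩ + c; i.e., the SUT quadrature is exact on all polynomials of degree at most 2 (the right-hand side equals E[q(X)] for any random vector X with mean μ and covariance C). -/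
/-!
The nodes come in antipodal pairs μ ± β qᵢ. On such a pair the linear terms cancel and the
cross terms ⟨μ, A qᵢ⟩, ⟨qᵢ, A μ⟩ cancel, so each pair contributes 2 q(μ) + 2β² ⟨qᵢ, A qᵢ⟩. With
the weight 1/(2β²) the d pairs give (d/β²) q(μ) + Σᵢ ⟨qᵢ, A qᵢ⟩; the centre weight 1 − d/β²
restores q(μ), and Σᵢ ⟨qᵢ, A qᵢ⟩ = trace(A Σᵢ qᵢ qᵢᵀ) = trace(A C).
-/

open Matrix

namespace Matrix

variable {n R : Type*} [Fintype n]

theorem trace_mul_vecMulVec [CommSemiring R] (A : Matrix n n R) (x y : n → R) :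
    (A * vecMulVec x y).trace = y ⬝ᵥ A *ᵥ x := by
  rw [mul_vecMulVec, trace_vecMulVec, dotProduct_comm]

theorem trace_mul_sum_vecMulVec_self [CommSemiring R] {ι : Type*} (s : Finset ι)
    (A : Matrix n n R) (q : ι → n → R) :
    (A * ∑ i ∈ s, vecMulVec (q i) (q i)).trace = ∑ i ∈ s, q i ⬝ᵥ A *ᵥ q i := by
  simp only [Matrix.mul_sum, trace_sum, trace_mul_vecMulVec]

theorem quadratic_add_add_quadratic_sub [CommRing R] (A : Matrix n n R) (b μ v : n → R)
    (c : R) :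
    ((μ + v) ⬝ᵥ A *ᵥ (μ + v) + b ⬝ᵥ (μ + v) + c) + ((μ - v) ⬝ᵥ A *ᵥ (μ - v) + b ⬝ᵥ (μ - v) + c)
      = 2 * (μ ⬝ᵥ A *ᵥ μ + b ⬝ᵥ μ + c) + 2 * (v ⬝ᵥ A *ᵥ v) := by
  simp only [mulVec_add, mulVec_sub, add_dotProduct, sub_dotProduct, dotProduct_add,
    dotProduct_sub]
  ring

end Matrix

theorem sut_exact_on_quadratics_general
    (d : ℕ) (β : ℝ) (hβ : 0 < β)
    (μ : Fin d → ℝ) (C : Matrix (Fin d) (Fin d) ℝ)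
    (q : Fin d → Fin d → ℝ)
    (hq : ∑ i, Matrix.vecMulVec (q i) (q i) = C)
    (A : Matrix (Fin d) (Fin d) ℝ) (b : Fin d → ℝ) (c : ℝ) :
    (1 - (d : ℝ) / β ^ 2) * (μ ⬝ᵥ A.mulVec μ + b ⬝ᵥ μ + c)
      + (∑ i, (1 / (2 * β ^ 2)) *
          ((μ + β • q i) ⬝ᵥ A.mulVec (μ + β • q i) + b ⬝ᵥ (μ + β • q i) + c))
      + (∑ i, (1 / (2 * β ^ 2)) *
          ((μ - β • q i) ⬝ᵥ A.mulVec (μ - β • q i) + b ⬝ᵥ (μ - β • q i) + c))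
      = (A * C).trace + μ ⬝ᵥ A.mulVec μ + b ⬝ᵥ μ + c := by
  have hβ2 : β ^ 2 ≠ 0 := pow_ne_zero 2 hβ.ne'
  have pair (i : Fin d) :
      (1 / (2 * β ^ 2)) * ((μ + β • q i) ⬝ᵥ A *ᵥ (μ + β • q i) + b ⬝ᵥ (μ + β • q i) + c)
        + (1 / (2 * β ^ 2)) * ((μ - β • q i) ⬝ᵥ A *ᵥ (μ - β • q i) + b ⬝ᵥ (μ - β • q i) + c)
      = (1 / β ^ 2) * (μ ⬝ᵥ A *ᵥ μ + b ⬝ᵥ μ + c) + q i ⬝ᵥ A *ᵥ q i := by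
    rw [← mul_add, quadratic_add_add_quadratic_sub, mulVec_smul, smul_dotProduct,
      dotProduct_smul, smul_eq_mul, smul_eq_mul]
    field_simp
  rw [add_assoc, ← Finset.sum_add_distrib, Finset.sum_congr rfl fun i _ => pair i,
    Finset.sum_add_distrib, Finset.sum_const, Finset.card_univ, Fintype.card_fin, nsmul_eq_mul,
    ← hq, trace_mul_sum_vecMulVec_self]
  field_simp
  ring

/-- The SUT quadrature (nodes σ₀ = μ, σᵢ = μ ± β qᵢ with weights 1 − d/β², 1/(2β²))
is exact on all polynomials of degree at most 2: for q(x) = ⟨x, A x⟩ + ⟨b, x⟩ + c, the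
weighted sum of q over the σ-points equals trace(A C) + ⟨μ, A μ⟩ + ⟨b, μ⟩ + c, which is
E[q(X)] for any random vector X with mean μ and covariance C = Σᵢ qᵢ qᵢᵀ. -/
theorem sut_exact_on_quadratics
    (d : ℕ) (hd : 1 ≤ d) (β : ℝ) (hβ : 0 < β)
    (μ : Fin d → ℝ) (C : Matrix (Fin d) (Fin d) ℝ)
    (q : Fin d → Fin d → ℝ)
    (hq : ∑ i, Matrix.vecMulVec (q i) (q i) = C)
    (A : Matrix (Fin d) (Fin d) ℝ) (b : Fin d → ℝ) (c : ℝ) :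
    (1 - (d : ℝ) / β ^ 2) * (μ ⬝ᵥ A.mulVec μ + b ⬝ᵥ μ + c)
      + (∑ i, (1 / (2 * β ^ 2)) *
          ((μ + β • q i) ⬝ᵥ A.mulVec (μ + β • q i) + b ⬝ᵥ (μ + β • q i) + c))
      + (∑ i, (1 / (2 * β ^ 2)) *
          ((μ - β • q i) ⬝ᵥ A.mulVec (μ - β • q i) + b ⬝ᵥ (μ - β • q i) + c))
      = (A * C).trace + μ ⬝ᵥ A.mulVec μ + b ⬝ᵥ μ + c :=
  sut_exact_on_quadratics_general d β hβ μ C q hq A b c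
end

section
/- Let T be a symmetric k-tensor of dimension d and let c ∈ (0,1]. Consider sequences of k-tensors T_ℓ, unit vectors v_ℓ ∈ ℝ^d, and reals λ_ℓ such that T₀ = T, v_ℓ is a unit eigenvector of T_ℓ with eigenvalue λ_ℓ, T_{ℓ+1} = T_ℓ − λ_ℓ v_ℓ^{⊗k}, and λ_ℓ ≥ c·|(T_ℓ)_{i₁…i_k}| for all indices i₁,…,i_k and all ℓ. Then with r = sqrt(1 − c²/d^k) ∈ [0,1): (i) ‖T_{ℓ+1}‖_F ≤ r·‖T_ℓ‖_F for all ℓ; (ii) ‖T_L‖_F ≤ r^L·‖T‖_F for all L ∈ ℕ, so that ‖T − Σ_{ℓ=0}^{L−1} λ_ℓ v_ℓ^{⊗k}‖_F ≤ r^L·‖T‖_F and ‖T_ℓ‖_F → 0 as ℓ → ∞. -/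
/-!
Contracting `T` against `v^{⊗(k+1)}` along the eigenvector equation gives `⟪T, v^{⊗(k+1)}⟫ = λ`,
and `v^{⊗(k+1)}` is a unit tensor, so each deflation step is an orthogonal projection:
`‖T - λ v^{⊗(k+1)}‖² = ‖T‖² - λ²`. Since `λ` dominates `c` times every one of the `d^{k+1}`
entries, `‖T‖² ≤ d^{k+1} λ² / c²`, whence `‖T - λ v^{⊗(k+1)}‖² ≤ (1 - c²/d^{k+1}) ‖T‖²`.
-/

open Finset

section Deflation

variable {α : Type*} [Fintype α]

lemma sum_sq_sub_mul_eq_of_inner_eq (T P : α → ℝ) {lam : ℝ}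
    (hTP : ∑ a, T a * P a = lam) (hP : ∑ a, P a ^ 2 = 1) :
    ∑ a, (T a - lam * P a) ^ 2 = ∑ a, T a ^ 2 - lam ^ 2 := by
  have hexpand : ∀ a, (T a - lam * P a) ^ 2
      = T a ^ 2 - 2 * lam * (T a * P a) + lam ^ 2 * P a ^ 2 := fun a => by ring
  simp_rw [hexpand, sum_add_distrib, sum_sub_distrib, ← mul_sum, hTP, hP]
  ring

lemma sq_mul_sum_sq_le_card_mul_sq (T : α → ℝ) {c lam : ℝ} (hc : 0 ≤ c)
    (hT : ∀ a, c * |T a| ≤ lam) :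
    c ^ 2 * ∑ a, T a ^ 2 ≤ Fintype.card α * lam ^ 2 := by
  rw [mul_sum, ← nsmul_eq_mul, ← card_univ, ← sum_const]
  refine sum_le_sum fun a _ => ?_
  rw [← sq_abs (T a), ← mul_pow]
  exact pow_le_pow_left₀ (by positivity) (hT a) 2

lemma sqrt_sum_sq_sub_mul_le (T P : α → ℝ) {c lam : ℝ} (hc : 0 ≤ c)
    (hTP : ∑ a, T a * P a = lam) (hP : ∑ a, P a ^ 2 = 1) (hT : ∀ a, c * |T a| ≤ lam) :
    √(∑ a, (T a - lam * P a) ^ 2)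
      ≤ √(1 - c ^ 2 / Fintype.card α) * √(∑ a, T a ^ 2) := by
  rw [← Real.sqrt_mul' _ (by positivity)]
  refine Real.sqrt_le_sqrt ?_
  have hlam : c ^ 2 / Fintype.card α * ∑ a, T a ^ 2 ≤ lam ^ 2 := by
    rw [div_mul_eq_mul_div]
    exact div_le_of_le_mul₀ (by positivity) (sq_nonneg lam)
      ((sq_mul_sum_sq_le_card_mul_sq T hc hT).trans_eq (mul_comm _ _))
  rw [sum_sq_sub_mul_eq_of_inner_eq T P hTP hP]
  linarith

end Deflation

section RankOne

variable {ι : Type*} [Fintype ι]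

lemma sum_fin_succ_pi_eq_sum_sum_snoc {k : ℕ} (F : (Fin (k + 1) → ι) → ℝ) :
    ∑ f, F f = ∑ s, ∑ g : Fin k → ι, F (Fin.snoc g s) := by
  rw [← (Fin.snocEquiv fun _ => ι).sum_comp, Fintype.sum_prod_type]
  rfl

lemma sum_mul_prod_eq_of_eigen {k : ℕ} (T : (Fin (k + 1) → ι) → ℝ) (v : ι → ℝ) {lam : ℝ}
    (hv : ∑ i, v i ^ 2 = 1)
    (heig : ∀ s, ∑ g : Fin k → ι, T (Fin.snoc g s) * ∏ j, v (g j) = lam * v s) :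
    ∑ f, T f * ∏ j, v (f j) = lam := by
  have hslice : ∀ s, ∑ g : Fin k → ι, T (Fin.snoc g s) * ∏ j, v ((Fin.snoc g s : _ → ι) j)
      = lam * v s ^ 2 := fun s => by
    simp_rw [Fin.prod_univ_castSucc, Fin.snoc_castSucc, Fin.snoc_last, ← mul_assoc, ← sum_mul,
      heig]
    ring
  rw [sum_fin_succ_pi_eq_sum_sum_snoc, sum_congr rfl fun s _ => hslice s, ← mul_sum, hv, mul_one]

lemma sum_prod_sq_eq_one {n : ℕ} (v : ι → ℝ) (hv : ∑ i, v i ^ 2 = 1) :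
    ∑ f : Fin n → ι, (∏ j, v (f j)) ^ 2 = 1 := by
  simp_rw [← prod_pow]
  rw [← Fintype.sum_pow (fun i => v i ^ 2), hv, one_pow]

end RankOne

theorem approx_rank1_decomposition_converges_general
    (d k : ℕ) (hd : 1 ≤ d)
    (T : (Fin (k + 1) → Fin d) → ℝ)
    (c : ℝ) (hc : 0 < c)
    (Tseq : ℕ → (Fin (k + 1) → Fin d) → ℝ)
    (v : ℕ → Fin d → ℝ) (lam : ℕ → ℝ)
    (hT0 : Tseq 0 = T)
    (hunit : ∀ ℓ, ∑ i, v ℓ i ^ 2 = 1)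
    (heig : ∀ ℓ (s : Fin d),
      ∑ f : Fin k → Fin d, Tseq ℓ (Fin.snoc f s) * ∏ j, v ℓ (f j) = lam ℓ * v ℓ s)
    (hrec : ∀ ℓ, Tseq (ℓ + 1) = fun f => Tseq ℓ f - lam ℓ * ∏ j, v ℓ (f j))
    (hbound : ∀ ℓ (f : Fin (k + 1) → Fin d), c * |Tseq ℓ f| ≤ lam ℓ) :
    (0 ≤ Real.sqrt (1 - c ^ 2 / (d : ℝ) ^ (k + 1))
        ∧ Real.sqrt (1 - c ^ 2 / (d : ℝ) ^ (k + 1)) < 1)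
    ∧ (∀ ℓ, Real.sqrt (∑ f, (Tseq (ℓ + 1) f) ^ 2)
        ≤ Real.sqrt (1 - c ^ 2 / (d : ℝ) ^ (k + 1)) * Real.sqrt (∑ f, (Tseq ℓ f) ^ 2))
    ∧ (∀ L : ℕ, Real.sqrt (∑ f, (Tseq L f) ^ 2)
        ≤ Real.sqrt (1 - c ^ 2 / (d : ℝ) ^ (k + 1)) ^ L * Real.sqrt (∑ f, (T f) ^ 2))
    ∧ (∀ L : ℕ, Real.sqrt (∑ f : Fin (k + 1) → Fin d,
          (T f - ∑ ℓ ∈ Finset.range L, lam ℓ * ∏ j, v ℓ (f j)) ^ 2)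
        ≤ Real.sqrt (1 - c ^ 2 / (d : ℝ) ^ (k + 1)) ^ L * Real.sqrt (∑ f, (T f) ^ 2))
    ∧ Filter.Tendsto (fun ℓ => Real.sqrt (∑ f, (Tseq ℓ f) ^ 2))
        Filter.atTop (nhds 0) := by
  set r := √(1 - c ^ 2 / (d : ℝ) ^ (k + 1)) with hr
  have hr1 : r < 1 := (Real.sqrt_lt' one_pos).2 <| by
    have : (0 : ℝ) < (d : ℝ) ^ (k + 1) := by positivity
    have : 0 < c ^ 2 / (d : ℝ) ^ (k + 1) := by positivity
    linarith
  have hstep : ∀ ℓ, √(∑ f, Tseq (ℓ + 1) f ^ 2) ≤ r * √(∑ f, Tseq ℓ f ^ 2) := fun ℓ => by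
    have hcard : (Fintype.card (Fin (k + 1) → Fin d) : ℝ) = (d : ℝ) ^ (k + 1) := by simp
    rw [hrec ℓ, hr, ← hcard]
    exact sqrt_sum_sq_sub_mul_le _ _ hc.le (sum_mul_prod_eq_of_eigen _ _ (hunit ℓ) (heig ℓ))
      (sum_prod_sq_eq_one _ (hunit ℓ)) (hbound ℓ)
  have hgeo : ∀ L, √(∑ f, Tseq L f ^ 2) ≤ r ^ L * √(∑ f, T f ^ 2) := fun L =>
    hT0 ▸ le_geom (u := fun L => √(∑ f, Tseq L f ^ 2)) (Real.sqrt_nonneg _) L fun ℓ _ => hstep ℓ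
  have hpartial : ∀ L, Tseq L = fun f => T f - ∑ ℓ ∈ range L, lam ℓ * ∏ j, v ℓ (f j) :=
    fun L => funext fun f => by
      have htelescope := sum_range_sub' (fun ℓ => Tseq ℓ f) L
      simp only [hrec, sub_sub_cancel, hT0] at htelescope
      rw [htelescope, sub_sub_cancel]
  refine ⟨⟨Real.sqrt_nonneg _, hr1⟩, hstep, hgeo, fun L => by simpa only [hpartial L] using hgeo L, ?_⟩
  refine squeeze_zero (fun _ => Real.sqrt_nonneg _) hgeo ?_
  simpa using (tendsto_pow_atTop_nhds_zero_of_lt_one (Real.sqrt_nonneg _) hr1).mul_const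
    (√(∑ f, T f ^ 2))

/-- Approximate rank-1 decomposition of a symmetric tensor T of order k+1 by repeatedly
subtracting the rank-1 term λ_ℓ v_ℓ^{⊗(k+1)} built from a unit eigenpair (v_ℓ, λ_ℓ) of T_ℓ,
assuming λ_ℓ ≥ c ⋅ |(T_ℓ)_{i₁…i_{k+1}}| for all entries with a universal constant c ∈ (0,1].
With r = sqrt(1 − c²/d^{k+1}) ∈ [0,1): (i) ‖T_{ℓ+1}‖_F ≤ r ‖T_ℓ‖_F; (ii) ‖T_L‖_F ≤ r^L ‖T‖_F,
hence ‖T − Σ_{ℓ<L} λ_ℓ v_ℓ^{⊗(k+1)}‖_F ≤ r^L ‖T‖_F and ‖T_ℓ‖_F → 0. -/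
theorem approx_rank1_decomposition_converges
    (d k : ℕ) (hd : 1 ≤ d)
    (T : (Fin (k + 1) → Fin d) → ℝ)
    (hTsym : ∀ (p : Equiv.Perm (Fin (k + 1))) (f : Fin (k + 1) → Fin d), T (f ∘ p) = T f)
    (c : ℝ) (hc : 0 < c) (hc1 : c ≤ 1)
    (Tseq : ℕ → (Fin (k + 1) → Fin d) → ℝ)
    (v : ℕ → Fin d → ℝ) (lam : ℕ → ℝ)
    (hT0 : Tseq 0 = T)
    (hunit : ∀ ℓ, ∑ i, v ℓ i ^ 2 = 1)
    (heig : ∀ ℓ (s : Fin d),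
      ∑ f : Fin k → Fin d, Tseq ℓ (Fin.snoc f s) * ∏ j, v ℓ (f j) = lam ℓ * v ℓ s)
    (hrec : ∀ ℓ, Tseq (ℓ + 1) = fun f => Tseq ℓ f - lam ℓ * ∏ j, v ℓ (f j))
    (hbound : ∀ ℓ (f : Fin (k + 1) → Fin d), c * |Tseq ℓ f| ≤ lam ℓ) :
    (0 ≤ Real.sqrt (1 - c ^ 2 / (d : ℝ) ^ (k + 1))
        ∧ Real.sqrt (1 - c ^ 2 / (d : ℝ) ^ (k + 1)) < 1)
    ∧ (∀ ℓ, Real.sqrt (∑ f, (Tseq (ℓ + 1) f) ^ 2)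
        ≤ Real.sqrt (1 - c ^ 2 / (d : ℝ) ^ (k + 1)) * Real.sqrt (∑ f, (Tseq ℓ f) ^ 2))
    ∧ (∀ L : ℕ, Real.sqrt (∑ f, (Tseq L f) ^ 2)
        ≤ Real.sqrt (1 - c ^ 2 / (d : ℝ) ^ (k + 1)) ^ L * Real.sqrt (∑ f, (T f) ^ 2))
    ∧ (∀ L : ℕ, Real.sqrt (∑ f : Fin (k + 1) → Fin d,
          (T f - ∑ ℓ ∈ Finset.range L, lam ℓ * ∏ j, v ℓ (f j)) ^ 2)
        ≤ Real.sqrt (1 - c ^ 2 / (d : ℝ) ^ (k + 1)) ^ L * Real.sqrt (∑ f, (T f) ^ 2))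
    ∧ Filter.Tendsto (fun ℓ => Real.sqrt (∑ f, (Tseq ℓ f) ^ 2))
        Filter.atTop (nhds 0) :=
  approx_rank1_decomposition_converges_general d k hd T c hc Tseq v lam hT0 hunit heig hrec hbound
end

section
/- Let T be a symmetric 3-tensor of dimension d and define λ_max(T) = max_{‖v‖=1} Σ_{i,j,k} T_{ijk} v_i v_j v_k. Then for all indices s, t ∈ {1,…,d}, λ_max(T) ≥ (3 / (2^{3/2} + 1)) · |T_{stt}|. -/
/-! On the unit circle of the plane spanned by `e_s` and `e_t`, symmetry of `T` turns the cubic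
form into the binary cubic `a x³ + 3b x²y + 3c xy² + e y³` with `c = T_{stt}`. Adding its values
at `(x, y)` and `(x, -y)` cancels the terms odd in `y`, so `2a x³ + 6c xy² ≤ 2λ`; at
`(x, y) = (±3/5, 4/5)`, together with `|a| ≤ λ` from the points `(±1, 0)`, this gives
`(18/19)|c| ≤ λ`, and `3 / (2√2 + 1) < 18/19`. When `s = t`, the points `±e_s` give
`|T_{sss}| ≤ λ` directly. -/

open Finset

theorem abs_le_of_cubic_le {a M : ℝ} (h : ∀ x : ℝ, x ^ 2 = 1 → a * x ^ 3 ≤ M) : |a| ≤ M :=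
  abs_le.2 ⟨by linarith [h (-1) (by norm_num)], by linarith [h 1 (by norm_num)]⟩

theorem mul_abs_le_of_cubic_le_on_unitCircle {a b c e M : ℝ}
    (h : ∀ x y : ℝ, x ^ 2 + y ^ 2 = 1 →
      a * x ^ 3 + 3 * b * x ^ 2 * y + 3 * c * x * y ^ 2 + e * y ^ 3 ≤ M) :
    18 / 19 * |c| ≤ M := by
  have ha := abs_le_of_cubic_le fun x hx => by simpa using h x 0 (by simpa using hx)
  rcases abs_cases c with ⟨hc, -⟩ | ⟨hc, -⟩ <;> rw [hc]
  · nlinarith [h (3 / 5) (4 / 5) (by norm_num), h (3 / 5) (-4 / 5) (by norm_num), abs_le.1 ha]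
  · nlinarith [h (-3 / 5) (4 / 5) (by norm_num), h (-3 / 5) (-4 / 5) (by norm_num), abs_le.1 ha]

theorem three_div_two_mul_sqrt_two_add_one_le : 3 / (2 * √2 + 1) ≤ 18 / 19 := by
  have h : (13 / 12 : ℝ) ≤ √2 := Real.le_sqrt_of_sq_le (by norm_num)
  rw [div_le_iff₀ (by positivity)]
  linarith

namespace Tensor3

variable {ι : Type*}

def IsSymmetric (T : (Fin 3 → ι) → ℝ) : Prop :=
  ∀ (p : Equiv.Perm (Fin 3)) (f : Fin 3 → ι), T (f ∘ p) = T f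

theorem IsSymmetric.apply_swap_left {T : (Fin 3 → ι) → ℝ} (hT : IsSymmetric T) (a b c : ι) :
    T ![b, a, c] = T ![a, b, c] := by
  simpa using hT (Equiv.swap 0 1) ![a, b, c]

theorem IsSymmetric.apply_swap_right {T : (Fin 3 → ι) → ℝ} (hT : IsSymmetric T) (a b c : ι) :
    T ![a, c, b] = T ![a, b, c] := by
  rw [← hT (Equiv.swap 1 2) ![a, b, c]]
  congr 1
  ext j
  fin_cases j <;> rfl

variable [Fintype ι]

def cubicForm (T : (Fin 3 → ι) → ℝ) (v : ι → ℝ) : ℝ :=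
  ∑ f : Fin 3 → ι, T f * ∏ j, v (f j)

theorem sum_fin_three_pi {M : Type*} [AddCommMonoid M] (F : (Fin 3 → ι) → M) :
    ∑ f, F f = ∑ i, ∑ j, ∑ k, F ![i, j, k] := by
  simp only [← (Fin.consEquiv fun _ => ι).sum_comp, Fintype.sum_prod_type, Fintype.sum_unique]
  rfl

theorem cubicForm_eq_sum (T : (Fin 3 → ι) → ℝ) (v : ι → ℝ) :
    cubicForm T v = ∑ i, v i * ∑ j, v j * ∑ k, v k * T ![i, j, k] := by
  simp only [cubicForm, sum_fin_three_pi, Fin.prod_univ_three, mul_sum]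
  refine sum_congr rfl fun i _ => sum_congr rfl fun j _ => sum_congr rfl fun k _ => ?_
  simp only [Fin.isValue, Matrix.cons_val_zero, Matrix.cons_val_one, Matrix.cons_val]
  ring

variable [DecidableEq ι]

theorem cubicForm_single (T : (Fin 3 → ι) → ℝ) (s : ι) (x : ℝ) :
    cubicForm T (Pi.single s x) = T ![s, s, s] * x ^ 3 := by
  simp only [cubicForm_eq_sum, Pi.single_apply, ite_mul, zero_mul, sum_ite_eq', mem_univ,
    ↓reduceIte]
  ring

theorem sum_sq_single (s : ι) (x : ℝ) : ∑ i, (Pi.single s x : ι → ℝ) i ^ 2 = x ^ 2 := by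
  simp [Pi.single_apply]

theorem sum_single_add_single_mul (s t : ι) (x y : ℝ) (g : ι → ℝ) :
    ∑ i, (Pi.single s x + Pi.single t y : ι → ℝ) i * g i = x * g s + y * g t := by
  simp [add_mul, sum_add_distrib, Pi.single_apply]

theorem sum_sq_single_add_single {s t : ι} (hst : s ≠ t) (x y : ℝ) :
    ∑ i, (Pi.single s x + Pi.single t y : ι → ℝ) i ^ 2 = x ^ 2 + y ^ 2 := by
  simp only [sq, sum_single_add_single_mul]
  simp [hst, hst.symm]

theorem cubicForm_single_add_single {T : (Fin 3 → ι) → ℝ} (hT : IsSymmetric T)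
    (s t : ι) (x y : ℝ) :
    cubicForm T (Pi.single s x + Pi.single t y) = T ![s, s, s] * x ^ 3
      + 3 * T ![s, s, t] * x ^ 2 * y + 3 * T ![s, t, t] * x * y ^ 2 + T ![t, t, t] * y ^ 3 := by
  simp only [cubicForm_eq_sum, sum_single_add_single_mul]
  have hsts : T ![s, t, s] = T ![s, s, t] := hT.apply_swap_right s s t
  have htss : T ![t, s, s] = T ![s, s, t] := by rw [hT.apply_swap_left, hT.apply_swap_right]
  have htst : T ![t, s, t] = T ![s, t, t] := hT.apply_swap_left s t t
  have htts : T ![t, t, s] = T ![s, t, t] := by rw [hT.apply_swap_right, hT.apply_swap_left]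
  rw [hsts, htss, htst, htts]
  ring

end Tensor3

open Tensor3

/-- For a symmetric 3-tensor T with λ_max(T) = max_{‖v‖=1} Σ T_{ijk} v_i v_j v_k, for all
indices s, t one has λ_max(T) ≥ (3 / (2^{3/2} + 1)) ⋅ |T_{stt}|, where 2^{3/2} = 2√2. -/
theorem symm3_lambda_max_ge_stt_entry
    (d : ℕ) (T : (Fin 3 → Fin d) → ℝ)
    (hsym : ∀ (p : Equiv.Perm (Fin 3)) (f : Fin 3 → Fin d), T (f ∘ p) = T f)
    (lamMax : ℝ)
    (hmax : IsGreatest {x : ℝ | ∃ v : Fin d → ℝ, (∑ i, v i ^ 2 = 1)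
        ∧ x = ∑ f : Fin 3 → Fin d, T f * ∏ j, v (f j)} lamMax)
    (s t : Fin d) :
    (3 / (2 * Real.sqrt 2 + 1)) * |T ![s, t, t]| ≤ lamMax := by
  have hle : ∀ v, ∑ i, v i ^ 2 = 1 → cubicForm T v ≤ lamMax := fun v hv => hmax.2 ⟨v, hv, rfl⟩
  suffices 18 / 19 * |T ![s, t, t]| ≤ lamMax from
    (mul_le_mul_of_nonneg_right three_div_two_mul_sqrt_two_add_one_le (abs_nonneg _)).trans this
  rcases eq_or_ne s t with rfl | hst
  · have h : |T ![s, s, s]| ≤ lamMax := abs_le_of_cubic_le fun x hx => by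
      simpa [cubicForm_single] using hle _ ((sum_sq_single s x).trans hx)
    linarith [abs_nonneg (T ![s, s, s])]
  · exact mul_abs_le_of_cubic_le_on_unitCircle fun x y hxy => by
      simpa [cubicForm_single_add_single hsym] using
        hle _ ((sum_sq_single_add_single hst x y).trans hxy)
end

section
/- Let T be a symmetric 3-tensor of dimension d and define λ_max(T) = max_{‖v‖=1} Σ_{i,j,k} T_{ijk} v_i v_j v_k. Then for all indices i, j, k ∈ {1,…,d}, λ_max(T) ≥ (2 / (3 + 4√2 + √3)) · |T_{ijk}|. -/
/-!
Polarization: for a symmetric 3-tensor `T` and vectors `a, b, c`, summing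
`s t u · T(x, x, x)` with `x = s a + t b + u c` over the eight sign patterns `s, t, u = ±1` gives
`48 · T(a, b, c)`. For unit vectors each such `x` has norm at most `3`, and the cubic form is odd
and homogeneous, so `|T(x, x, x)| ≤ 27 λ_max`. With `a, b, c` standard basis vectors this gives
`48 |T_{ijk}| ≤ 216 λ_max`, i.e. the constant `2/9`, which beats `2 / (3 + 4√2 + √3)`.
-/

open Finset

section General

variable {R ι : Type*} [CommRing R] [Fintype ι] {n : ℕ}

def tensorForm (T : (Fin n → ι) → R) (w : Fin n → ι → R) : R :=
  ∑ f : Fin n → ι, T f * ∏ m, w m (f m)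

def IsSymmetricTensor (T : (Fin n → ι) → R) : Prop :=
  ∀ (p : Equiv.Perm (Fin n)) (f : Fin n → ι), T (f ∘ p) = T f

theorem IsSymmetricTensor.tensorForm_comp_perm {T : (Fin n → ι) → R} (hT : IsSymmetricTensor T)
    (w : Fin n → ι → R) (p : Equiv.Perm (Fin n)) : tensorForm T (w ∘ p) = tensorForm T w := by
  refine Fintype.sum_equiv (p.arrowCongr (Equiv.refl ι)) _ _ fun f => ?_
  have hprod : ∏ m, w (p m) (f m) = ∏ m, w m (f (p.symm m)) := by
    simpa using Equiv.prod_comp p fun m => w m (f (p.symm m))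
  change T f * ∏ m, w (p m) (f m) = T (f ∘ p.symm) * ∏ m, w m (f (p.symm m))
  rw [hT p.symm f, hprod]

theorem IsSymmetricTensor.tensorForm_swap_01 {T : (Fin 3 → ι) → R} (hT : IsSymmetricTensor T)
    (a b c : ι → R) : tensorForm T ![b, a, c] = tensorForm T ![a, b, c] := by
  rw [← hT.tensorForm_comp_perm _ (Equiv.swap 0 1)]
  congr 1
  ext m : 1
  fin_cases m <;> rfl

theorem IsSymmetricTensor.tensorForm_swap_12 {T : (Fin 3 → ι) → R} (hT : IsSymmetricTensor T)
    (a b c : ι → R) : tensorForm T ![a, c, b] = tensorForm T ![a, b, c] := by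
  rw [← hT.tensorForm_comp_perm _ (Equiv.swap 1 2)]
  congr 1
  ext m : 1
  fin_cases m <;> rfl

theorem tensorForm_const_smul (T : (Fin n → ι) → R) (r : R) (v : ι → R) :
    tensorForm T (fun _ => r • v) = r ^ n * tensorForm T (fun _ => v) := by
  simp only [tensorForm, mul_sum, Pi.smul_apply, smul_eq_mul, prod_mul_distrib, prod_const,
    card_univ, Fintype.card_fin]
  exact sum_congr rfl fun f _ => by ring

theorem tensorForm_single [DecidableEq ι] (T : (Fin n → ι) → R) (g : Fin n → ι) :
    tensorForm T (fun m => Pi.single (g m) 1) = T g := by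
  rw [tensorForm, sum_eq_single g (fun f _ hf => ?_) (by simp)]
  · simp
  · obtain ⟨m, hm⟩ := Function.ne_iff.mp hf
    rw [prod_eq_zero (mem_univ m) (by simp [hm]), mul_zero]

end General

section Real

variable {ι : Type*} [Fintype ι]

theorem tensorForm_polarization (T : (Fin 3 → ι) → ℝ) (a b c : ι → ℝ) :
    ∑ s ∈ {1, -1}, ∑ t ∈ {1, -1}, ∑ u ∈ {1, -1},
        s * t * u * tensorForm T (fun _ => s • a + t • b + u • c) =
      8 * (tensorForm T ![a, b, c] + tensorForm T ![a, c, b] + tensorForm T ![b, a, c] +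
        tensorForm T ![b, c, a] + tensorForm T ![c, a, b] + tensorForm T ![c, b, a]) := by
  simp only [sum_pair (show (1 : ℝ) ≠ -1 by norm_num), tensorForm, mul_sum, ← sum_add_distrib]
  refine sum_congr rfl fun f _ => ?_
  simp only [Fin.prod_univ_three, Pi.add_apply, Pi.smul_apply, smul_eq_mul, Matrix.cons_val_zero,
    Matrix.cons_val_one, Matrix.cons_val]
  ring

theorem IsSymmetricTensor.tensorForm_polarization {T : (Fin 3 → ι) → ℝ}
    (hT : IsSymmetricTensor T) (a b c : ι → ℝ) :
    ∑ s ∈ {1, -1}, ∑ t ∈ {1, -1}, ∑ u ∈ {1, -1},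
        s * t * u * tensorForm T (fun _ => s • a + t • b + u • c) =
      48 * tensorForm T ![a, b, c] := by
  have e1 := hT.tensorForm_swap_12 a b c
  have e2 := hT.tensorForm_swap_01 a b c
  have e3 := hT.tensorForm_swap_12 b a c
  have e4 := hT.tensorForm_swap_01 a c b
  have e5 := hT.tensorForm_swap_12 c a b
  rw [_root_.tensorForm_polarization]
  linarith

theorem sum_sq_add_add_le (x y z : ι → ℝ) :
    ∑ l, (x l + y l + z l) ^ 2 ≤ 3 * (∑ l, x l ^ 2 + ∑ l, y l ^ 2 + ∑ l, z l ^ 2) := by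
  simp only [mul_add, mul_sum, ← sum_add_distrib]
  exact sum_le_sum fun l _ => by
    nlinarith [sq_nonneg (x l - y l), sq_nonneg (y l - z l), sq_nonneg (x l - z l)]

variable {n : ℕ} {T : (Fin n → ι) → ℝ} {M : ℝ}

theorem abs_tensorForm_le (hn : Odd n)
    (hM : ∀ v : ι → ℝ, ∑ l, v l ^ 2 = 1 → tensorForm T (fun _ => v) ≤ M) (v : ι → ℝ) :
    |tensorForm T (fun _ => v)| ≤ M * √(∑ l, v l ^ 2) ^ n := by
  have hunit : ∀ u : ι → ℝ, ∑ l, u l ^ 2 = 1 → |tensorForm T (fun _ => u)| ≤ M := by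
    intro u hu
    have hneg := hM (-u) (by simpa using hu)
    rw [← neg_one_smul ℝ u, tensorForm_const_smul, hn.neg_one_pow] at hneg
    exact abs_le.mpr ⟨by linarith, hM u hu⟩
  set r := √(∑ l, v l ^ 2)
  have hr : r ^ 2 = ∑ l, v l ^ 2 := Real.sq_sqrt (sum_nonneg fun l _ => sq_nonneg _)
  have hr0 : 0 ≤ r := Real.sqrt_nonneg _
  rcases hr0.eq_or_lt with hr0 | hr0
  · have hv : v = 0 := by
      ext l
      rw [← hr0, zero_pow two_ne_zero, eq_comm,
        sum_eq_zero_iff_of_nonneg fun l _ => sq_nonneg _] at hr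
      simpa using hr l (mem_univ l)
    rw [← hr0, hv, ← zero_smul ℝ (0 : ι → ℝ), tensorForm_const_smul, zero_pow hn.pos.ne']
    simp
  · have hu : ∑ l, (r⁻¹ • v) l ^ 2 = 1 := by
      simp only [Pi.smul_apply, smul_eq_mul, mul_pow, ← mul_sum, ← hr]
      rw [← mul_pow, inv_mul_cancel₀ hr0.ne', one_pow]
    rw [← smul_inv_smul₀ hr0.ne' v, tensorForm_const_smul, abs_mul, abs_of_pos (pow_pos hr0 n),
      mul_comm]
    exact mul_le_mul_of_nonneg_right (hunit _ hu) (pow_pos hr0 n).le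

theorem abs_tensorForm_le_of_sum_sq_le (hn : Odd n)
    (hM : ∀ v : ι → ℝ, ∑ l, v l ^ 2 = 1 → tensorForm T (fun _ => v) ≤ M) (hM0 : 0 ≤ M)
    {ρ : ℝ} (hρ : 0 ≤ ρ) {v : ι → ℝ} (hv : ∑ l, v l ^ 2 ≤ ρ ^ 2) :
    |tensorForm T (fun _ => v)| ≤ M * ρ ^ n := by
  refine (abs_tensorForm_le hn hM v).trans ?_
  gcongr
  exact Real.sqrt_le_iff.mpr ⟨hρ, hv⟩

theorem IsSymmetricTensor.abs_tensorForm_le {T : (Fin 3 → ι) → ℝ} (hT : IsSymmetricTensor T)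
    (hM : ∀ v : ι → ℝ, ∑ l, v l ^ 2 = 1 → tensorForm T (fun _ => v) ≤ M) {a b c : ι → ℝ}
    (ha : ∑ l, a l ^ 2 = 1) (hb : ∑ l, b l ^ 2 = 1) (hc : ∑ l, c l ^ 2 = 1) :
    2 * |tensorForm T ![a, b, c]| ≤ 9 * M := by
  have hM0 : 0 ≤ M := by
    simpa [ha] using (abs_nonneg _).trans (_root_.abs_tensorForm_le ⟨1, rfl⟩ hM a)
  have hsign : ∀ s ∈ ({1, -1} : Finset ℝ), |s| = 1 ∧ ∀ v : ι → ℝ,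
      ∑ l, (s • v) l ^ 2 = ∑ l, v l ^ 2 := by
    simp
  have hterm : ∀ s ∈ ({1, -1} : Finset ℝ), ∀ t ∈ ({1, -1} : Finset ℝ),
      ∀ u ∈ ({1, -1} : Finset ℝ),
      |s * t * u * tensorForm T (fun _ => s • a + t • b + u • c)| ≤ M * 3 ^ 3 := by
    intro s hs t ht u hu
    obtain ⟨hs1, hsa⟩ := hsign s hs
    obtain ⟨ht1, htb⟩ := hsign t ht
    obtain ⟨hu1, huc⟩ := hsign u hu
    have hnorm : ∑ l, (s • a + t • b + u • c) l ^ 2 ≤ 3 ^ 2 := by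
      calc ∑ l, (s • a + t • b + u • c) l ^ 2
          ≤ 3 * (∑ l, (s • a) l ^ 2 + ∑ l, (t • b) l ^ 2 + ∑ l, (u • c) l ^ 2) :=
            sum_sq_add_add_le _ _ _
        _ = 3 ^ 2 := by rw [hsa, htb, huc, ha, hb, hc]; norm_num
    rw [abs_mul, abs_mul, abs_mul, hs1, ht1, hu1, one_mul, one_mul, one_mul]
    exact abs_tensorForm_le_of_sum_sq_le ⟨1, rfl⟩ hM hM0 (by norm_num) hnorm
  have hpolar : 48 * |tensorForm T ![a, b, c]| ≤ 216 * M := by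
    calc 48 * |tensorForm T ![a, b, c]|
        = |∑ s ∈ {1, -1}, ∑ t ∈ {1, -1}, ∑ u ∈ {1, -1},
            s * t * u * tensorForm T (fun _ => s • a + t • b + u • c)| := by
          rw [hT.tensorForm_polarization, abs_mul]; norm_num
      _ ≤ ∑ s ∈ {1, -1}, ∑ t ∈ {1, -1}, ∑ u ∈ {1, -1},
            |s * t * u * tensorForm T (fun _ => s • a + t • b + u • c)| :=
          (abs_sum_le_sum_abs _ _).trans <| sum_le_sum fun s _ =>
            (abs_sum_le_sum_abs _ _).trans <| sum_le_sum fun t _ => abs_sum_le_sum_abs _ _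
      _ ≤ ∑ s ∈ ({1, -1} : Finset ℝ), ∑ t ∈ ({1, -1} : Finset ℝ),
            ∑ u ∈ ({1, -1} : Finset ℝ), M * 3 ^ 3 :=
          sum_le_sum fun s hs => sum_le_sum fun t ht => sum_le_sum fun u hu =>
            hterm s hs t ht u hu
      _ = 216 * M := by simp [card_pair (show (1 : ℝ) ≠ -1 by norm_num)]; ring
  linarith

end Real

theorem sum_sq_single {ι : Type*} [Fintype ι] [DecidableEq ι] (l : ι) :
    ∑ m, (Pi.single l 1 : ι → ℝ) m ^ 2 = 1 := by
  simp [Pi.single_apply]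

/-- For a symmetric 3-tensor T with λ_max(T) = max_{‖v‖=1} Σ T_{ijk} v_i v_j v_k, every
entry satisfies λ_max(T) ≥ (2 / (3 + 4√2 + √3)) ⋅ |T_{ijk}|. -/
theorem symm3_lambda_max_ge_any_entry
    (d : ℕ) (T : (Fin 3 → Fin d) → ℝ)
    (hsym : ∀ (p : Equiv.Perm (Fin 3)) (f : Fin 3 → Fin d), T (f ∘ p) = T f)
    (lamMax : ℝ)
    (hmax : IsGreatest {x : ℝ | ∃ v : Fin d → ℝ, (∑ i, v i ^ 2 = 1)
        ∧ x = ∑ f : Fin 3 → Fin d, T f * ∏ j, v (f j)} lamMax)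
    (i j k : Fin d) :
    (2 / (3 + 4 * Real.sqrt 2 + Real.sqrt 3)) * |T ![i, j, k]| ≤ lamMax := by
  have hbasis : (fun m => Pi.single (![i, j, k] m) (1 : ℝ)) =
      ![Pi.single i 1, Pi.single j 1, Pi.single k 1] := by
    ext m : 1
    fin_cases m <;> rfl
  have hentry : 2 * |T ![i, j, k]| ≤ 9 * lamMax := by
    have h := IsSymmetricTensor.abs_tensorForm_le hsym (fun v hv => hmax.2 ⟨v, hv, rfl⟩)
      (sum_sq_single i) (sum_sq_single j) (sum_sq_single k)
    rwa [← hbasis, tensorForm_single] at h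
  have hconst : 9 ≤ 3 + 4 * Real.sqrt 2 + Real.sqrt 3 := by
    have h2 : 5 / 4 ≤ Real.sqrt 2 := Real.le_sqrt_of_sq_le (by norm_num)
    have h3 : 1 ≤ Real.sqrt 3 := Real.le_sqrt_of_sq_le (by norm_num)
    linarith
  calc 2 / (3 + 4 * Real.sqrt 2 + Real.sqrt 3) * |T ![i, j, k]|
      ≤ 2 / 9 * |T ![i, j, k]| := by gcongr
    _ ≤ lamMax := by linarith
end

section
/- With the 4-moment σ-points σ_i and weights w_i of the Higher Order Unscented Transform (i = −2,…,N, N = 2(d+J+L)), the weights sum to one, Σ_{i=−2}^{N} w_i = 1, and the first moment is matched exactly: Σ_{i=−2}^{N} w_i σ_i = μ. -/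
/-!
The σ-points other than μ come in pairs μ ± h x. A pair with equal weights w contributes
2w to the total weight and 2w μ to the weighted sum, since the displacements ± h x cancel;
a pair with opposite weights ±w contributes nothing to the total weight and 2wh x to the
weighted sum. The only opposite-weight pairs are the α-pair, contributing α⁻¹ α μ̂ = μ̂, and
the γ-pairs, contributing γ⁻³ γ μ̃ = γ⁻² μ̃ = −μ̂, so the displacements cancel, and the weight
of μ was chosen to make the total weight 1.
-/

open Finset

section SigmaPointPairs

variable {R M ι : Type*} [CommRing R] [AddCommGroup M] [Module R M]

theorem smul_add_add_smul_sub (w h : R) (μ x : M) :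
    w • (μ + h • x) + w • (μ - h • x) = (2 * w) • μ := by
  module

theorem smul_add_add_neg_smul_sub (w h : R) (μ x : M) :
    w • (μ + h • x) + (-w) • (μ - h • x) = (2 * w * h) • x := by
  module

theorem Finset.sum_smul_add_add_sum_smul_sub (s : Finset ι) (w : ι → R) (h : R) (μ : M)
    (x : ι → M) :
    ∑ i ∈ s, w i • (μ + h • x i) + ∑ i ∈ s, w i • (μ - h • x i)
      = (2 * ∑ i ∈ s, w i) • μ := by
  rw [← sum_add_distrib, mul_sum, sum_smul]
  exact sum_congr rfl fun i _ => smul_add_add_smul_sub (w i) h μ (x i)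

theorem Finset.sum_smul_add_add_sum_neg_smul_sub (s : Finset ι) (w h : R) (μ : M)
    (x : ι → M) :
    ∑ i ∈ s, w • (μ + h • x i) + ∑ i ∈ s, (-w) • (μ - h • x i)
      = (2 * w * h) • ∑ i ∈ s, x i := by
  rw [← sum_add_distrib, smul_sum]
  exact sum_congr rfl fun i _ => smul_add_add_neg_smul_sub w h μ (x i)

end SigmaPointPairs

theorem inv_pow_succ_mul_self {K : Type*} [Field K] (a : K) {n : ℕ} (hn : n ≠ 0) :
    (a ^ (n + 1))⁻¹ * a = (a ^ n)⁻¹ := by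
  rcases eq_or_ne a 0 with rfl | ha
  · simp [hn]
  · rw [pow_succ, mul_inv, mul_assoc, inv_mul_cancel₀ ha, mul_one]

theorem hout_weights_sum_to_one_and_match_mean_general
    (d J L : ℕ) (α β γ δ : ℝ) (hα : 0 < α)
    (μ : Fin d → ℝ)
    (vt : Fin J → Fin d → ℝ) (ut : Fin L → Fin d → ℝ)
    (s : Fin L → ℝ)
    (q : Fin d → Fin d → ℝ)
    (Lh : ℝ) (hLh : Lh = ∑ i, s i)
    (μt : Fin d → ℝ) (hμt : μt = ∑ i, vt i)
    (μh : Fin d → ℝ) (hμh : μh = -((γ ^ 2)⁻¹ • μt)) :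
    ((1 - (d : ℝ) * (β ^ 2)⁻¹ - Lh * (δ ^ 4)⁻¹)
        + α⁻¹ / 2 + (-(α⁻¹ / 2))
        + (∑ _i : Fin d, (β ^ 2)⁻¹ / 2) + (∑ _i : Fin d, (β ^ 2)⁻¹ / 2)
        + (∑ _i : Fin J, (γ ^ 3)⁻¹ / 2) + (∑ _i : Fin J, -((γ ^ 3)⁻¹ / 2))
        + (∑ i : Fin L, (δ ^ 4)⁻¹ * s i / 2) + (∑ i : Fin L, (δ ^ 4)⁻¹ * s i / 2) = 1)
    ∧ ((1 - (d : ℝ) * (β ^ 2)⁻¹ - Lh * (δ ^ 4)⁻¹) • μ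
        + (α⁻¹ / 2) • (μ + α • μh)
        + (-(α⁻¹ / 2)) • (μ - α • μh)
        + (∑ i, ((β ^ 2)⁻¹ / 2) • (μ + β • q i))
        + (∑ i, ((β ^ 2)⁻¹ / 2) • (μ - β • q i))
        + (∑ i, ((γ ^ 3)⁻¹ / 2) • (μ + γ • vt i))
        + (∑ i, (-((γ ^ 3)⁻¹ / 2)) • (μ - γ • vt i))
        + (∑ i, ((δ ^ 4)⁻¹ * s i / 2) • (μ + δ • ut i))
        + (∑ i, ((δ ^ 4)⁻¹ * s i / 2) • (μ - δ • ut i)) = μ) := by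
  set w₀ := 1 - (d : ℝ) * (β ^ 2)⁻¹ - Lh * (δ ^ 4)⁻¹
  have h_weights : w₀ + 2 * ∑ _i : Fin d, (β ^ 2)⁻¹ / 2
      + 2 * ∑ i : Fin L, (δ ^ 4)⁻¹ * s i / 2 = 1 := by
    simp only [w₀, hLh, sum_const, card_univ, Fintype.card_fin, nsmul_eq_mul, ← sum_div,
      ← mul_sum]
    ring
  have h_alpha : 2 * (α⁻¹ / 2) * α = 1 := by field_simp
  have h_gamma : 2 * ((γ ^ 3)⁻¹ / 2) * γ = (γ ^ 2)⁻¹ := by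
    rw [mul_div_cancel₀ _ two_ne_zero]
    exact inv_pow_succ_mul_self γ two_ne_zero
  constructor
  · rw [sum_neg_distrib]
    linear_combination h_weights
  · rw [show ∀ x₀ x₁ x₂ x₃ x₄ x₅ x₆ x₇ x₈ : Fin d → ℝ,
        x₀ + x₁ + x₂ + x₃ + x₄ + x₅ + x₆ + x₇ + x₈
          = x₀ + (x₁ + x₂) + (x₃ + x₄) + (x₅ + x₆) + (x₇ + x₈)
        from fun _ _ _ _ _ _ _ _ _ => by abel,
      smul_add_add_neg_smul_sub, sum_smul_add_add_sum_smul_sub,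
      sum_smul_add_add_sum_neg_smul_sub, sum_smul_add_add_sum_smul_sub,
      h_alpha, h_gamma, ← hμt, hμh]
    linear_combination (norm := module) h_weights • μ

/-- HOUT (Higher Order Unscented Transform), 4-moment σ-points and weights: the weights
sum to 1 and the σ-points match the mean μ exactly. The σ-points are μ (weight
1 − dβ⁻² − L̂δ⁻⁴), μ ± α μ̂ (weights ±α⁻¹/2), μ ± β qᵢ for the columns qᵢ of a square root
of Ĉ = C − δ⁻²C̃ (weights β⁻²/2), μ ± γ ṽᵢ (weights ±γ⁻³/2), and μ ± δ ũᵢ (weights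
sᵢδ⁻⁴/2), where C̃ = Σ sᵢ ũᵢũᵢᵀ, L̂ = Σ sᵢ, μ̃ = Σ ṽᵢ, and μ̂ = −γ⁻² μ̃. -/
theorem hout_weights_sum_to_one_and_match_mean
    (d J L : ℕ) (α β γ δ : ℝ) (hα : 0 < α) (hβ : 0 < β) (hγ : 0 < γ) (hδ : 0 < δ)
    (μ : Fin d → ℝ) (C : Matrix (Fin d) (Fin d) ℝ)
    (vt : Fin J → Fin d → ℝ) (ut : Fin L → Fin d → ℝ)
    (s : Fin L → ℝ) (hs : ∀ i, s i = 1 ∨ s i = -1)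
    (Ct : Matrix (Fin d) (Fin d) ℝ) (hCt : Ct = ∑ i, s i • Matrix.vecMulVec (ut i) (ut i))
    (Ch : Matrix (Fin d) (Fin d) ℝ) (hCh : Ch = C - (δ ^ 2)⁻¹ • Ct)
    (q : Fin d → Fin d → ℝ) (hq : ∑ i, Matrix.vecMulVec (q i) (q i) = Ch)
    (Lh : ℝ) (hLh : Lh = ∑ i, s i)
    (μt : Fin d → ℝ) (hμt : μt = ∑ i, vt i)
    (μh : Fin d → ℝ) (hμh : μh = -((γ ^ 2)⁻¹ • μt)) :
    ((1 - (d : ℝ) * (β ^ 2)⁻¹ - Lh * (δ ^ 4)⁻¹)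
        + α⁻¹ / 2 + (-(α⁻¹ / 2))
        + (∑ _i : Fin d, (β ^ 2)⁻¹ / 2) + (∑ _i : Fin d, (β ^ 2)⁻¹ / 2)
        + (∑ _i : Fin J, (γ ^ 3)⁻¹ / 2) + (∑ _i : Fin J, -((γ ^ 3)⁻¹ / 2))
        + (∑ i : Fin L, (δ ^ 4)⁻¹ * s i / 2) + (∑ i : Fin L, (δ ^ 4)⁻¹ * s i / 2) = 1)
    ∧ ((1 - (d : ℝ) * (β ^ 2)⁻¹ - Lh * (δ ^ 4)⁻¹) • μ
        + (α⁻¹ / 2) • (μ + α • μh)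
        + (-(α⁻¹ / 2)) • (μ - α • μh)
        + (∑ i, ((β ^ 2)⁻¹ / 2) • (μ + β • q i))
        + (∑ i, ((β ^ 2)⁻¹ / 2) • (μ - β • q i))
        + (∑ i, ((γ ^ 3)⁻¹ / 2) • (μ + γ • vt i))
        + (∑ i, (-((γ ^ 3)⁻¹ / 2)) • (μ - γ • vt i))
        + (∑ i, ((δ ^ 4)⁻¹ * s i / 2) • (μ + δ • ut i))
        + (∑ i, ((δ ^ 4)⁻¹ * s i / 2) • (μ - δ • ut i)) = μ) :=
  hout_weights_sum_to_one_and_match_mean_general d J L α β γ δ hα μ vt ut s q Lh hLh μt hμt μh hμh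
end

section
/- With the 4-moment σ-points σ_i and weights w_i of the Higher Order Unscented Transform (i = −2,…,N, N = 2(d+J+L)), the second moment is matched exactly: Σ_{i=−2}^{N} w_i (σ_i − μ)(σ_i − μ)ᵀ = C. -/
/-!
The σ-points come in pairs μ ± x. A pair with opposite weights ±w contributes nothing to the
second moment because (−x)(−x)ᵀ = xxᵀ; this disposes of the points μ ± αμ̂ and μ ± γṽᵢ, and the
centre μ contributes nothing at all. A pair with equal weights w/2 at μ ± c x contributes
c²w xxᵀ, so the β-points give Σ qᵢqᵢᵀ = Ĉ and the δ-points give δ⁻²C̃, which add up to C.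
-/

namespace Matrix

variable {R m ι : Type*} [Fintype ι]

theorem vecMulVec_neg_neg [Mul R] [HasDistribNeg R] (x : m → R) :
    vecMulVec (-x) (-x) = vecMulVec x x := by
  rw [neg_vecMulVec, vecMulVec_neg, neg_neg]

theorem vecMulVec_smul_smul [CommSemiring R] (c : R) (x : m → R) :
    vecMulVec (c • x) (c • x) = c ^ 2 • vecMulVec x x := by
  rw [smul_vecMulVec, vecMulVec_smul, smul_smul, sq]

variable [CommRing R]

theorem smul_vecMulVec_add_neg_smul_vecMulVec_neg (w : R) (x : m → R) :
    w • vecMulVec x x + (-w) • vecMulVec (-x) (-x) = 0 := by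
  rw [vecMulVec_neg_neg, neg_smul, add_neg_cancel]

theorem sum_smul_vecMulVec_add_sum_neg_smul_vecMulVec_neg (w : R) (x : ι → m → R) :
    ∑ i, w • vecMulVec (x i) (x i) + ∑ i, (-w) • vecMulVec (-x i) (-x i) = 0 := by
  simp only [← Finset.sum_add_distrib, smul_vecMulVec_add_neg_smul_vecMulVec_neg,
    Finset.sum_const_zero]

theorem sum_smul_vecMulVec_add_sum_smul_vecMulVec_neg_smul (w : ι → R) (c : R)
    (x : ι → m → R) :
    ∑ i, w i • vecMulVec (c • x i) (c • x i) + ∑ i, w i • vecMulVec (-(c • x i)) (-(c • x i))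
      = ∑ i, (2 * c ^ 2 * w i) • vecMulVec (x i) (x i) := by
  simp only [vecMulVec_neg_neg, ← Finset.sum_add_distrib, vecMulVec_smul_smul, smul_smul,
    ← add_smul]
  congr! 2 with i
  ring

end Matrix

open Matrix

theorem hout_matches_covariance_general
    (d J L : ℕ) (α β γ δ : ℝ) (hβ : 0 < β)
    (μ : Fin d → ℝ) (C : Matrix (Fin d) (Fin d) ℝ)
    (vt : Fin J → Fin d → ℝ) (ut : Fin L → Fin d → ℝ)
    (s : Fin L → ℝ)
    (Ct : Matrix (Fin d) (Fin d) ℝ) (hCt : Ct = ∑ i, s i • Matrix.vecMulVec (ut i) (ut i))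
    (Ch : Matrix (Fin d) (Fin d) ℝ) (hCh : Ch = C - (δ ^ 2)⁻¹ • Ct)
    (q : Fin d → Fin d → ℝ) (hq : ∑ i, Matrix.vecMulVec (q i) (q i) = Ch)
    (Lh : ℝ)
    (μh : Fin d → ℝ) :
    (1 - (d : ℝ) * (β ^ 2)⁻¹ - Lh * (δ ^ 4)⁻¹) • Matrix.vecMulVec (μ - μ) (μ - μ)
      + (α⁻¹ / 2) • Matrix.vecMulVec ((μ + α • μh) - μ) ((μ + α • μh) - μ)
      + (-(α⁻¹ / 2)) • Matrix.vecMulVec ((μ - α • μh) - μ) ((μ - α • μh) - μ)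
      + (∑ i, ((β ^ 2)⁻¹ / 2) • Matrix.vecMulVec ((μ + β • q i) - μ) ((μ + β • q i) - μ))
      + (∑ i, ((β ^ 2)⁻¹ / 2) • Matrix.vecMulVec ((μ - β • q i) - μ) ((μ - β • q i) - μ))
      + (∑ i, ((γ ^ 3)⁻¹ / 2) • Matrix.vecMulVec ((μ + γ • vt i) - μ) ((μ + γ • vt i) - μ))
      + (∑ i, (-((γ ^ 3)⁻¹ / 2)) • Matrix.vecMulVec ((μ - γ • vt i) - μ) ((μ - γ • vt i) - μ))
      + (∑ i, ((δ ^ 4)⁻¹ * s i / 2) • Matrix.vecMulVec ((μ + δ • ut i) - μ) ((μ + δ • ut i) - μ))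
      + (∑ i, ((δ ^ 4)⁻¹ * s i / 2) • Matrix.vecMulVec ((μ - δ • ut i) - μ) ((μ - δ • ut i) - μ))
      = C := by
  subst hCt hCh
  simp only [add_sub_cancel_left, sub_sub_cancel_left, sub_self, vecMulVec_zero, smul_zero,
    zero_add]
  have hmean := smul_vecMulVec_add_neg_smul_vecMulVec_neg (α⁻¹ / 2) (α • μh)
  have hskew :=
    sum_smul_vecMulVec_add_sum_neg_smul_vecMulVec_neg ((γ ^ 3)⁻¹ / 2) (fun i => γ • vt i)
  have hsqrt : ∑ i, ((β ^ 2)⁻¹ / 2) • vecMulVec (β • q i) (β • q i)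
      + ∑ i, ((β ^ 2)⁻¹ / 2) • vecMulVec (-(β • q i)) (-(β • q i))
      = ∑ i, vecMulVec (q i) (q i) := by
    have hweight : 2 * β ^ 2 * ((β ^ 2)⁻¹ / 2) = 1 := by field_simp
    simp only [sum_smul_vecMulVec_add_sum_smul_vecMulVec_neg_smul, hweight, one_smul]
  have hsigned : ∑ i, ((δ ^ 4)⁻¹ * s i / 2) • vecMulVec (δ • ut i) (δ • ut i)
      + ∑ i, ((δ ^ 4)⁻¹ * s i / 2) • vecMulVec (-(δ • ut i)) (-(δ • ut i))
      = (δ ^ 2)⁻¹ • ∑ i, s i • vecMulVec (ut i) (ut i) := by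
    have hweight (i : Fin L) : 2 * δ ^ 2 * ((δ ^ 4)⁻¹ * s i / 2) = (δ ^ 2)⁻¹ * s i := by
      field_simp
    simp only [sum_smul_vecMulVec_add_sum_smul_vecMulVec_neg_smul, hweight, Finset.smul_sum,
      smul_smul]
  beta_reduce at hskew
  linear_combination (norm := module) hmean + hsqrt + hskew + hsigned + hq

/-- HOUT (Higher Order Unscented Transform), 4-moment σ-points and weights: the weighted
sum of the outer products (σᵢ − μ)(σᵢ − μ)ᵀ equals the covariance C exactly. The σ-points
are μ (weight 1 − dβ⁻² − L̂δ⁻⁴), μ ± α μ̂ (weights ±α⁻¹/2), μ ± β qᵢ for the columns qᵢ of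
a square root of Ĉ = C − δ⁻²C̃ (weights β⁻²/2), μ ± γ ṽᵢ (weights ±γ⁻³/2), and μ ± δ ũᵢ
(weights sᵢδ⁻⁴/2), where C̃ = Σ sᵢ ũᵢũᵢᵀ, L̂ = Σ sᵢ, μ̃ = Σ ṽᵢ, and μ̂ = −γ⁻² μ̃. -/
theorem hout_matches_covariance
    (d J L : ℕ) (α β γ δ : ℝ) (hα : 0 < α) (hβ : 0 < β) (hγ : 0 < γ) (hδ : 0 < δ)
    (μ : Fin d → ℝ) (C : Matrix (Fin d) (Fin d) ℝ)
    (vt : Fin J → Fin d → ℝ) (ut : Fin L → Fin d → ℝ)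
    (s : Fin L → ℝ) (hs : ∀ i, s i = 1 ∨ s i = -1)
    (Ct : Matrix (Fin d) (Fin d) ℝ) (hCt : Ct = ∑ i, s i • Matrix.vecMulVec (ut i) (ut i))
    (Ch : Matrix (Fin d) (Fin d) ℝ) (hCh : Ch = C - (δ ^ 2)⁻¹ • Ct)
    (q : Fin d → Fin d → ℝ) (hq : ∑ i, Matrix.vecMulVec (q i) (q i) = Ch)
    (Lh : ℝ) (hLh : Lh = ∑ i, s i)
    (μt : Fin d → ℝ) (hμt : μt = ∑ i, vt i)
    (μh : Fin d → ℝ) (hμh : μh = -((γ ^ 2)⁻¹ • μt)) :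
    (1 - (d : ℝ) * (β ^ 2)⁻¹ - Lh * (δ ^ 4)⁻¹) • Matrix.vecMulVec (μ - μ) (μ - μ)
      + (α⁻¹ / 2) • Matrix.vecMulVec ((μ + α • μh) - μ) ((μ + α • μh) - μ)
      + (-(α⁻¹ / 2)) • Matrix.vecMulVec ((μ - α • μh) - μ) ((μ - α • μh) - μ)
      + (∑ i, ((β ^ 2)⁻¹ / 2) • Matrix.vecMulVec ((μ + β • q i) - μ) ((μ + β • q i) - μ))
      + (∑ i, ((β ^ 2)⁻¹ / 2) • Matrix.vecMulVec ((μ - β • q i) - μ) ((μ - β • q i) - μ))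
      + (∑ i, ((γ ^ 3)⁻¹ / 2) • Matrix.vecMulVec ((μ + γ • vt i) - μ) ((μ + γ • vt i) - μ))
      + (∑ i, (-((γ ^ 3)⁻¹ / 2)) • Matrix.vecMulVec ((μ - γ • vt i) - μ) ((μ - γ • vt i) - μ))
      + (∑ i, ((δ ^ 4)⁻¹ * s i / 2) • Matrix.vecMulVec ((μ + δ • ut i) - μ) ((μ + δ • ut i) - μ))
      + (∑ i, ((δ ^ 4)⁻¹ * s i / 2) • Matrix.vecMulVec ((μ - δ • ut i) - μ) ((μ - δ • ut i) - μ))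
      = C :=
  hout_matches_covariance_general d J L α β γ δ hβ μ C vt ut s Ct hCt Ch hCh q hq Lh μh
end

section
/- With the 4-moment σ-points σ_i and weights w_i of the Higher Order Unscented Transform (i = −2,…,N, N = 2(d+J+L)), suppose S is a 3-tensor with ‖S − Σ_{i=1}^J ṽ_i^{⊗3}‖_F ≤ τ/2 and K is a 4-tensor with ‖K − Σ_{i=1}^L s_i ũ_i^{⊗4}‖_F ≤ τ/2, for some τ ≥ 0. Then ‖Σ_{i=−2}^{N} w_i (σ_i − μ)^{⊗3} − S‖_F ≤ τ/2 + α²·‖μ̂^{⊗3}‖_F, and ‖Σ_{i=−2}^{N} w_i (σ_i − μ)^{⊗4} − K‖_F ≤ τ/2 + β²·‖C̄‖_F, where C̄ = Σ_{i=1}^d q_i^{⊗4}. -/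
/-!
The σ-points other than μ come in pairs μ ± c x, whose contribution to the `k`-th moment
Σᵢ wᵢ (σᵢ − μ)^{⊗k} is (w₊ cᵏ + w₋ (−c)ᵏ) x^{⊗k}. For `k = 3` the β- and δ-pairs cancel, the
γ-pair reproduces Σ ṽᵢ^{⊗3} and the α-pair leaves α² μ̂^{⊗3}; for `k = 4` the α- and γ-pairs
cancel, the δ-pair reproduces Σ sᵢ ũᵢ^{⊗4} and the β-pair leaves β² C̄. Both bounds are then the
triangle inequality for the Frobenius norm.
-/

open Finset

theorem prod_add_smul_sub_self_apply {α R : Type*} [CommRing R] {k : ℕ} (μ x : α → R) (c : R)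
    (f : Fin k → α) : ∏ j, ((μ + c • x) - μ) (f j) = c ^ k * ∏ j, x (f j) := by
  simp [prod_mul_distrib]

theorem prod_sub_smul_sub_self_apply {α R : Type*} [CommRing R] {k : ℕ} (μ x : α → R) (c : R)
    (f : Fin k → α) : ∏ j, ((μ - c • x) - μ) (f j) = (-c) ^ k * ∏ j, x (f j) := by
  rw [sub_eq_add_neg μ, ← neg_smul, prod_add_smul_sub_self_apply]

theorem sqrt_sum_sq_sub_le_of_eq_add {ι : Type*} [Fintype ι] {M S T p : ι → ℝ} {c ε : ℝ}
    (hM : ∀ i, M i = T i + c * p i) (hS : √(∑ i, (S i - T i) ^ 2) ≤ ε) (hc : 0 ≤ c) :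
    √(∑ i, (M i - S i) ^ 2) ≤ ε + c * √(∑ i, p i ^ 2) := by
  let toE : (ι → ℝ) → EuclideanSpace ℝ ι := WithLp.toLp 2
  have hdist : ∀ a b : ι → ℝ, √(∑ i, (a i - b i) ^ 2) = dist (toE a) (toE b) := fun a b => by
    simp [toE, EuclideanSpace.dist_eq, Real.dist_eq]
  have hMT : dist (toE M) (toE T) = c * √(∑ i, p i ^ 2) := by
    rw [← hdist]
    simp only [hM, add_sub_cancel_left, mul_pow, ← mul_sum]
    rw [Real.sqrt_mul (sq_nonneg c), Real.sqrt_sq hc]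
  calc √(∑ i, (M i - S i) ^ 2) = dist (toE M) (toE S) := hdist M S
    _ ≤ dist (toE M) (toE T) + dist (toE S) (toE T) := dist_triangle_right _ _ _
    _ ≤ ε + c * √(∑ i, p i ^ 2) := by rw [hMT, ← hdist]; linarith

section HOUT

variable {d J L k : ℕ} (α β γ δ Lh : ℝ) (μ μh : Fin d → ℝ) (q : Fin d → Fin d → ℝ)
  (vt : Fin J → Fin d → ℝ) (ut : Fin L → Fin d → ℝ) (s : Fin L → ℝ)

/-- Entry `f` of the `k`-th moment tensor Σᵢ wᵢ (σᵢ − μ)^{⊗k} of the 4-moment σ-points. -/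
noncomputable def houtMoment (f : Fin k → Fin d) : ℝ :=
  ((1 - (d : ℝ) * (β ^ 2)⁻¹ - Lh * (δ ^ 4)⁻¹) * ∏ j, (μ - μ) (f j))
    + (α⁻¹ / 2) * ∏ j, ((μ + α • μh) - μ) (f j)
    + (-(α⁻¹ / 2)) * ∏ j, ((μ - α • μh) - μ) (f j)
    + (∑ i, ((β ^ 2)⁻¹ / 2) * ∏ j, ((μ + β • q i) - μ) (f j))
    + (∑ i, ((β ^ 2)⁻¹ / 2) * ∏ j, ((μ - β • q i) - μ) (f j))
    + (∑ i, ((γ ^ 3)⁻¹ / 2) * ∏ j, ((μ + γ • vt i) - μ) (f j))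
    + (∑ i, (-((γ ^ 3)⁻¹ / 2)) * ∏ j, ((μ - γ • vt i) - μ) (f j))
    + (∑ i, ((δ ^ 4)⁻¹ * s i / 2) * ∏ j, ((μ + δ • ut i) - μ) (f j))
    + (∑ i, ((δ ^ 4)⁻¹ * s i / 2) * ∏ j, ((μ - δ • ut i) - μ) (f j))

theorem houtMoment_eq (hk : k ≠ 0) (f : Fin k → Fin d) :
    houtMoment α β γ δ Lh μ μh q vt ut s f =
      α⁻¹ / 2 * (α ^ k - (-α) ^ k) * ∏ j, μh (f j)
        + (β ^ 2)⁻¹ / 2 * (β ^ k + (-β) ^ k) * ∑ i, ∏ j, q i (f j)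
        + (γ ^ 3)⁻¹ / 2 * (γ ^ k - (-γ) ^ k) * ∑ i, ∏ j, vt i (f j)
        + (δ ^ 4)⁻¹ / 2 * (δ ^ k + (-δ) ^ k) * ∑ i, s i * ∏ j, ut i (f j) := by
  simp only [houtMoment, prod_add_smul_sub_self_apply, prod_sub_smul_sub_self_apply, sub_self,
    Pi.zero_apply, prod_const, card_univ, Fintype.card_fin, zero_pow hk]
  have hut : ∀ c : ℝ, ∑ i, (δ ^ 4)⁻¹ * s i / 2 * (c * ∏ j, ut i (f j)) =
      (δ ^ 4)⁻¹ / 2 * c * ∑ i, s i * ∏ j, ut i (f j) := fun c => by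
    rw [mul_sum]; exact sum_congr rfl fun i _ => by ring
  rw [hut, hut]
  simp only [← mul_assoc, ← mul_sum]
  ring

theorem houtMoment_three (hγ : γ ≠ 0) (f : Fin 3 → Fin d) :
    houtMoment α β γ δ Lh μ μh q vt ut s f = ∑ i, ∏ j, vt i (f j) + α ^ 2 * ∏ j, μh (f j) := by
  rw [houtMoment_eq (hk := three_ne_zero)]
  field_simp
  ring

theorem houtMoment_four (hδ : δ ≠ 0) (f : Fin 4 → Fin d) :
    houtMoment α β γ δ Lh μ μh q vt ut s f =
      ∑ i, s i * ∏ j, ut i (f j) + β ^ 2 * ∑ i, ∏ j, q i (f j) := by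
  rw [houtMoment_eq (hk := four_ne_zero)]
  field_simp
  ring

end HOUT

theorem hout_skewness_kurtosis_error_bounds_general
    (d J L : ℕ) (α β γ δ : ℝ) (hγ : 0 < γ) (hδ : 0 < δ)
    (μ : Fin d → ℝ) (vt : Fin J → Fin d → ℝ) (ut : Fin L → Fin d → ℝ) (s : Fin L → ℝ)
    (q : Fin d → Fin d → ℝ) (Lh : ℝ) (μh : Fin d → ℝ) (τ : ℝ)
    (S : (Fin 3 → Fin d) → ℝ)
    (hS : Real.sqrt (∑ f : Fin 3 → Fin d, (S f - ∑ i, ∏ j, vt i (f j)) ^ 2) ≤ τ / 2)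
    (K : (Fin 4 → Fin d) → ℝ)
    (hK : Real.sqrt (∑ f : Fin 4 → Fin d, (K f - ∑ i, s i * ∏ j, ut i (f j)) ^ 2) ≤ τ / 2)
    (Cb : (Fin 4 → Fin d) → ℝ) (hCb : Cb = fun f => ∑ i, ∏ j, q i (f j)) :
    (Real.sqrt (∑ f : Fin 3 → Fin d,
        (((1 - (d : ℝ) * (β ^ 2)⁻¹ - Lh * (δ ^ 4)⁻¹) * ∏ j, (μ - μ) (f j))
          + (α⁻¹ / 2) * ∏ j, ((μ + α • μh) - μ) (f j)
          + (-(α⁻¹ / 2)) * ∏ j, ((μ - α • μh) - μ) (f j)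
          + (∑ i, ((β ^ 2)⁻¹ / 2) * ∏ j, ((μ + β • q i) - μ) (f j))
          + (∑ i, ((β ^ 2)⁻¹ / 2) * ∏ j, ((μ - β • q i) - μ) (f j))
          + (∑ i, ((γ ^ 3)⁻¹ / 2) * ∏ j, ((μ + γ • vt i) - μ) (f j))
          + (∑ i, (-((γ ^ 3)⁻¹ / 2)) * ∏ j, ((μ - γ • vt i) - μ) (f j))
          + (∑ i, ((δ ^ 4)⁻¹ * s i / 2) * ∏ j, ((μ + δ • ut i) - μ) (f j))
          + (∑ i, ((δ ^ 4)⁻¹ * s i / 2) * ∏ j, ((μ - δ • ut i) - μ) (f j))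
          - S f) ^ 2)
      ≤ τ / 2 + α ^ 2 * Real.sqrt (∑ f : Fin 3 → Fin d, (∏ j, μh (f j)) ^ 2))
    ∧ (Real.sqrt (∑ f : Fin 4 → Fin d,
        (((1 - (d : ℝ) * (β ^ 2)⁻¹ - Lh * (δ ^ 4)⁻¹) * ∏ j, (μ - μ) (f j))
          + (α⁻¹ / 2) * ∏ j, ((μ + α • μh) - μ) (f j)
          + (-(α⁻¹ / 2)) * ∏ j, ((μ - α • μh) - μ) (f j)
          + (∑ i, ((β ^ 2)⁻¹ / 2) * ∏ j, ((μ + β • q i) - μ) (f j))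
          + (∑ i, ((β ^ 2)⁻¹ / 2) * ∏ j, ((μ - β • q i) - μ) (f j))
          + (∑ i, ((γ ^ 3)⁻¹ / 2) * ∏ j, ((μ + γ • vt i) - μ) (f j))
          + (∑ i, (-((γ ^ 3)⁻¹ / 2)) * ∏ j, ((μ - γ • vt i) - μ) (f j))
          + (∑ i, ((δ ^ 4)⁻¹ * s i / 2) * ∏ j, ((μ + δ • ut i) - μ) (f j))
          + (∑ i, ((δ ^ 4)⁻¹ * s i / 2) * ∏ j, ((μ - δ • ut i) - μ) (f j))
          - K f) ^ 2)
      ≤ τ / 2 + β ^ 2 * Real.sqrt (∑ f : Fin 4 → Fin d, (Cb f) ^ 2)) := by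
  subst hCb
  exact ⟨sqrt_sum_sq_sub_le_of_eq_add
      (houtMoment_three α β γ δ Lh μ μh q vt ut s hγ.ne') hS (sq_nonneg α),
    sqrt_sum_sq_sub_le_of_eq_add
      (houtMoment_four α β γ δ Lh μ μh q vt ut s hδ.ne') hK (sq_nonneg β)⟩

/-- HOUT (Higher Order Unscented Transform): if the skewness S and kurtosis K admit
approximate rank-1 decompositions ‖S − Σ ṽᵢ^{⊗3}‖_F ≤ τ/2 and ‖K − Σ sᵢ ũᵢ^{⊗4}‖_F ≤ τ/2,
then the 4-moment σ-points match S and K up to errors τ/2 + α²‖μ̂^{⊗3}‖_F and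
τ/2 + β²‖C̄‖_F respectively, where C̄ = Σᵢ qᵢ^{⊗4}. -/
theorem hout_skewness_kurtosis_error_bounds
    (d J L : ℕ) (α β γ δ : ℝ) (hα : 0 < α) (hβ : 0 < β) (hγ : 0 < γ) (hδ : 0 < δ)
    (μ : Fin d → ℝ) (C : Matrix (Fin d) (Fin d) ℝ)
    (vt : Fin J → Fin d → ℝ) (ut : Fin L → Fin d → ℝ)
    (s : Fin L → ℝ) (hs : ∀ i, s i = 1 ∨ s i = -1)
    (Ct : Matrix (Fin d) (Fin d) ℝ) (hCt : Ct = ∑ i, s i • Matrix.vecMulVec (ut i) (ut i))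
    (Ch : Matrix (Fin d) (Fin d) ℝ) (hCh : Ch = C - (δ ^ 2)⁻¹ • Ct)
    (q : Fin d → Fin d → ℝ) (hq : ∑ i, Matrix.vecMulVec (q i) (q i) = Ch)
    (Lh : ℝ) (hLh : Lh = ∑ i, s i)
    (μt : Fin d → ℝ) (hμt : μt = ∑ i, vt i)
    (μh : Fin d → ℝ) (hμh : μh = -((γ ^ 2)⁻¹ • μt))
    (τ : ℝ) (hτ : 0 ≤ τ)
    (S : (Fin 3 → Fin d) → ℝ)
    (hS : Real.sqrt (∑ f : Fin 3 → Fin d, (S f - ∑ i, ∏ j, vt i (f j)) ^ 2) ≤ τ / 2)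
    (K : (Fin 4 → Fin d) → ℝ)
    (hK : Real.sqrt (∑ f : Fin 4 → Fin d, (K f - ∑ i, s i * ∏ j, ut i (f j)) ^ 2) ≤ τ / 2)
    (Cb : (Fin 4 → Fin d) → ℝ) (hCb : Cb = fun f => ∑ i, ∏ j, q i (f j)) :
    (Real.sqrt (∑ f : Fin 3 → Fin d,
        (((1 - (d : ℝ) * (β ^ 2)⁻¹ - Lh * (δ ^ 4)⁻¹) * ∏ j, (μ - μ) (f j))
          + (α⁻¹ / 2) * ∏ j, ((μ + α • μh) - μ) (f j)
          + (-(α⁻¹ / 2)) * ∏ j, ((μ - α • μh) - μ) (f j)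
          + (∑ i, ((β ^ 2)⁻¹ / 2) * ∏ j, ((μ + β • q i) - μ) (f j))
          + (∑ i, ((β ^ 2)⁻¹ / 2) * ∏ j, ((μ - β • q i) - μ) (f j))
          + (∑ i, ((γ ^ 3)⁻¹ / 2) * ∏ j, ((μ + γ • vt i) - μ) (f j))
          + (∑ i, (-((γ ^ 3)⁻¹ / 2)) * ∏ j, ((μ - γ • vt i) - μ) (f j))
          + (∑ i, ((δ ^ 4)⁻¹ * s i / 2) * ∏ j, ((μ + δ • ut i) - μ) (f j))
          + (∑ i, ((δ ^ 4)⁻¹ * s i / 2) * ∏ j, ((μ - δ • ut i) - μ) (f j))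
          - S f) ^ 2)
      ≤ τ / 2 + α ^ 2 * Real.sqrt (∑ f : Fin 3 → Fin d, (∏ j, μh (f j)) ^ 2))
    ∧ (Real.sqrt (∑ f : Fin 4 → Fin d,
        (((1 - (d : ℝ) * (β ^ 2)⁻¹ - Lh * (δ ^ 4)⁻¹) * ∏ j, (μ - μ) (f j))
          + (α⁻¹ / 2) * ∏ j, ((μ + α • μh) - μ) (f j)
          + (-(α⁻¹ / 2)) * ∏ j, ((μ - α • μh) - μ) (f j)
          + (∑ i, ((β ^ 2)⁻¹ / 2) * ∏ j, ((μ + β • q i) - μ) (f j))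
          + (∑ i, ((β ^ 2)⁻¹ / 2) * ∏ j, ((μ - β • q i) - μ) (f j))
          + (∑ i, ((γ ^ 3)⁻¹ / 2) * ∏ j, ((μ + γ • vt i) - μ) (f j))
          + (∑ i, (-((γ ^ 3)⁻¹ / 2)) * ∏ j, ((μ - γ • vt i) - μ) (f j))
          + (∑ i, ((δ ^ 4)⁻¹ * s i / 2) * ∏ j, ((μ + δ • ut i) - μ) (f j))
          + (∑ i, ((δ ^ 4)⁻¹ * s i / 2) * ∏ j, ((μ - δ • ut i) - μ) (f j))
          - K f) ^ 2)
      ≤ τ / 2 + β ^ 2 * Real.sqrt (∑ f : Fin 4 → Fin d, (Cb f) ^ 2)) :=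
  hout_skewness_kurtosis_error_bounds_general d J L α β γ δ hγ hδ μ vt ut s q Lh μh τ S hS K hK Cb
    hCb
end

section
/- With the 4-moment σ-points σ_i and weights w_i of the Higher Order Unscented Transform (i = −2,…,N, N = 2(d+J+L)), suppose S is a 3-tensor with ‖S − Σ_{i=1}^J ṽ_i^{⊗3}‖_F ≤ τ/2 and K is a 4-tensor with ‖K − Σ_{i=1}^L s_i ũ_i^{⊗4}‖_F ≤ τ/2, for some τ > 0. Let C̄ = Σ_{i=1}^d q_i^{⊗4}, and assume ‖μ̂^{⊗3}‖_F > 0 and ‖C̄‖_F > 0. If additionally α < sqrt(τ / (2‖μ̂^{⊗3}‖_F)) and β < sqrt(τ / (2‖C̄‖_F)), then ‖Σ_{i=−2}^{N} w_i (σ_i − μ)^{⊗3} − S‖_F < τ and ‖Σ_{i=−2}^{N} w_i (σ_i − μ)^{⊗4} − K‖_F < τ. -/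
/-!
The ± pairs of σ-points cancel the odd or the even powers of their offsets. Hence the third
weighted central moment is exactly `α² μ̂^{⊗3} + Σ ṽᵢ^{⊗3}` and the fourth is exactly
`β² C̄ + Σ sᵢ ũᵢ^{⊗4}`. The constraints on `α` and `β` make the Frobenius norms of `α² μ̂^{⊗3}`
and `β² C̄` smaller than `τ / 2`, and the triangle inequality adds the decomposition error `τ / 2`.
-/

open Finset

lemma sqrt_sum_sq_eq_norm {ι : Type*} [Fintype ι] (T : ι → ℝ) :
    √(∑ i, T i ^ 2) = ‖WithLp.toLp 2 T‖ := by
  simp [EuclideanSpace.norm_eq]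

lemma mul_lt_of_lt_div_of_nonneg {a b c : ℝ} (ha : 0 ≤ a) (hc : 0 ≤ c) (h : a < b / c) :
    a * c < b := by
  rcases hc.eq_or_lt with rfl | hc
  · simp at h; linarith
  · exact (lt_div_iff₀ hc).mp h

lemma sqrt_sum_sq_sub_lt_of_eq_mul_add {ι : Type*} [Fintype ι] {c τ : ℝ} {M A B S : ι → ℝ}
    (hM : ∀ i, M i = c * A i + B i) (hc : 0 ≤ c) (hcA : c < τ / (2 * √(∑ i, A i ^ 2)))
    (hSB : √(∑ i, (S i - B i) ^ 2) ≤ τ / 2) :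
    √(∑ i, (M i - S i) ^ 2) < τ := by
  have hA : c * √(∑ i, A i ^ 2) < τ / 2 := by
    rw [← div_div] at hcA
    exact mul_lt_of_lt_div_of_nonneg hc (by positivity) hcA
  rw [sqrt_sum_sq_eq_norm] at hA hSB ⊢
  calc ‖WithLp.toLp 2 fun i => M i - S i‖
      = ‖c • WithLp.toLp 2 A - WithLp.toLp 2 fun i => S i - B i‖ := by
        congr 1; ext i; simp [hM]; ring
    _ ≤ c * ‖WithLp.toLp 2 A‖ + ‖WithLp.toLp 2 fun i => S i - B i‖ := by
        grw [norm_sub_le, norm_smul, Real.norm_of_nonneg hc]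
    _ < τ := by linarith

lemma prod_add_smul_sub_self {k d : ℕ} (μ v : Fin d → ℝ) (c : ℝ) (f : Fin k → Fin d) :
    ∏ j, ((μ + c • v) - μ) (f j) = c ^ k * ∏ j, v (f j) := by
  simp [prod_mul_distrib]

lemma prod_sub_smul_sub_self {k d : ℕ} (μ v : Fin d → ℝ) (c : ℝ) (f : Fin k → Fin d) :
    ∏ j, ((μ - c • v) - μ) (f j) = (-c) ^ k * ∏ j, v (f j) := by
  simp [← prod_add_smul_sub_self μ v (-c), sub_eq_add_neg]

lemma sum_mul_prod_add_smul_sub_self {ι : Type*} [Fintype ι] {k d : ℕ} (μ : Fin d → ℝ)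
    (w : ι → ℝ) (c : ℝ) (v : ι → Fin d → ℝ) (f : Fin k → Fin d) :
    ∑ i, w i * ∏ j, ((μ + c • v i) - μ) (f j) = c ^ k * ∑ i, w i * ∏ j, v i (f j) := by
  simp only [prod_add_smul_sub_self, mul_sum, mul_left_comm]

lemma sum_mul_prod_sub_smul_sub_self {ι : Type*} [Fintype ι] {k d : ℕ} (μ : Fin d → ℝ)
    (w : ι → ℝ) (c : ℝ) (v : ι → Fin d → ℝ) (f : Fin k → Fin d) :
    ∑ i, w i * ∏ j, ((μ - c • v i) - μ) (f j) = (-c) ^ k * ∑ i, w i * ∏ j, v i (f j) := by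
  simp only [prod_sub_smul_sub_self, mul_sum, mul_left_comm]

section SigmaPoints

variable {d J L : ℕ} (α β γ δ : ℝ) (μ μh : Fin d → ℝ) (q : Fin d → Fin d → ℝ)
  (vt : Fin J → Fin d → ℝ) (ut : Fin L → Fin d → ℝ) (s : Fin L → ℝ) (Lh : ℝ)

/-- The weighted `k`-th central moment `Σ_{i=-2}^N wᵢ (σᵢ - μ)^{⊗k}` of the 4-moment σ-points. -/
noncomputable def sigmaPointMoment (k : ℕ) (f : Fin k → Fin d) : ℝ :=
  ((1 - (d : ℝ) * (β ^ 2)⁻¹ - Lh * (δ ^ 4)⁻¹) * ∏ j, (μ - μ) (f j))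
    + (α⁻¹ / 2) * ∏ j, ((μ + α • μh) - μ) (f j)
    + (-(α⁻¹ / 2)) * ∏ j, ((μ - α • μh) - μ) (f j)
    + (∑ i, ((β ^ 2)⁻¹ / 2) * ∏ j, ((μ + β • q i) - μ) (f j))
    + (∑ i, ((β ^ 2)⁻¹ / 2) * ∏ j, ((μ - β • q i) - μ) (f j))
    + (∑ i, ((γ ^ 3)⁻¹ / 2) * ∏ j, ((μ + γ • vt i) - μ) (f j))
    + (∑ i, (-((γ ^ 3)⁻¹ / 2)) * ∏ j, ((μ - γ • vt i) - μ) (f j))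
    + (∑ i, ((δ ^ 4)⁻¹ * s i / 2) * ∏ j, ((μ + δ • ut i) - μ) (f j))
    + (∑ i, ((δ ^ 4)⁻¹ * s i / 2) * ∏ j, ((μ - δ • ut i) - μ) (f j))

lemma sigmaPointMoment_eq {k : ℕ} (hk : k ≠ 0) (f : Fin k → Fin d) :
    sigmaPointMoment α β γ δ μ μh q vt ut s Lh k f
      = (α ^ k - (-α) ^ k) * (α⁻¹ / 2) * ∏ j, μh (f j)
        + (β ^ k + (-β) ^ k) * ((β ^ 2)⁻¹ / 2) * ∑ i, ∏ j, q i (f j)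
        + (γ ^ k - (-γ) ^ k) * ((γ ^ 3)⁻¹ / 2) * ∑ i, ∏ j, vt i (f j)
        + (δ ^ k + (-δ) ^ k) * ((δ ^ 4)⁻¹ / 2) * ∑ i, s i * ∏ j, ut i (f j) := by
  simp only [sigmaPointMoment, sum_mul_prod_add_smul_sub_self, sum_mul_prod_sub_smul_sub_self]
  simp only [prod_add_smul_sub_self, prod_sub_smul_sub_self, sub_self, Pi.zero_apply, prod_const,
    card_univ, Fintype.card_fin, zero_pow hk, neg_mul, sum_neg_distrib,
    mul_div_right_comm _ (s _), mul_assoc, ← mul_sum]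
  ring

lemma sigmaPointMoment_three (hγ : γ ≠ 0) (f : Fin 3 → Fin d) :
    sigmaPointMoment α β γ δ μ μh q vt ut s Lh 3 f
      = α ^ 2 * ∏ j, μh (f j) + ∑ i, ∏ j, vt i (f j) := by
  rw [sigmaPointMoment_eq (hk := three_ne_zero), Odd.neg_pow (by decide),
    Odd.neg_pow (by decide), Odd.neg_pow (by decide), Odd.neg_pow (by decide)]
  field_simp
  ring

lemma sigmaPointMoment_four (hδ : δ ≠ 0) (f : Fin 4 → Fin d) :
    sigmaPointMoment α β γ δ μ μh q vt ut s Lh 4 f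
      = β ^ 2 * ∑ i, ∏ j, q i (f j) + ∑ i, s i * ∏ j, ut i (f j) := by
  rw [sigmaPointMoment_eq (hk := four_ne_zero), Even.neg_pow (by decide),
    Even.neg_pow (by decide), Even.neg_pow (by decide), Even.neg_pow (by decide)]
  field_simp
  ring

end SigmaPoints

theorem hout_skewness_kurtosis_tolerance_general
    (d J L : ℕ) (α β γ δ : ℝ) (hα : 0 < α) (hβ : 0 < β) (hγ : 0 < γ) (hδ : 0 < δ)
    (μ : Fin d → ℝ) (vt : Fin J → Fin d → ℝ) (ut : Fin L → Fin d → ℝ) (s : Fin L → ℝ)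
    (q : Fin d → Fin d → ℝ) (Lh : ℝ) (μh : Fin d → ℝ) (τ : ℝ)
    (S : (Fin 3 → Fin d) → ℝ)
    (hS : Real.sqrt (∑ f : Fin 3 → Fin d, (S f - ∑ i, ∏ j, vt i (f j)) ^ 2) ≤ τ / 2)
    (K : (Fin 4 → Fin d) → ℝ)
    (hK : Real.sqrt (∑ f : Fin 4 → Fin d, (K f - ∑ i, s i * ∏ j, ut i (f j)) ^ 2) ≤ τ / 2)
    (Cb : (Fin 4 → Fin d) → ℝ) (hCb : Cb = fun f => ∑ i, ∏ j, q i (f j))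
    (hαsmall : α < Real.sqrt (τ / (2 * Real.sqrt (∑ f : Fin 3 → Fin d, (∏ j, μh (f j)) ^ 2))))
    (hβsmall : β < Real.sqrt (τ / (2 * Real.sqrt (∑ f : Fin 4 → Fin d, (Cb f) ^ 2)))) :
    (Real.sqrt (∑ f : Fin 3 → Fin d,
        (((1 - (d : ℝ) * (β ^ 2)⁻¹ - Lh * (δ ^ 4)⁻¹) * ∏ j, (μ - μ) (f j))
          + (α⁻¹ / 2) * ∏ j, ((μ + α • μh) - μ) (f j)
          + (-(α⁻¹ / 2)) * ∏ j, ((μ - α • μh) - μ) (f j)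
          + (∑ i, ((β ^ 2)⁻¹ / 2) * ∏ j, ((μ + β • q i) - μ) (f j))
          + (∑ i, ((β ^ 2)⁻¹ / 2) * ∏ j, ((μ - β • q i) - μ) (f j))
          + (∑ i, ((γ ^ 3)⁻¹ / 2) * ∏ j, ((μ + γ • vt i) - μ) (f j))
          + (∑ i, (-((γ ^ 3)⁻¹ / 2)) * ∏ j, ((μ - γ • vt i) - μ) (f j))
          + (∑ i, ((δ ^ 4)⁻¹ * s i / 2) * ∏ j, ((μ + δ • ut i) - μ) (f j))
          + (∑ i, ((δ ^ 4)⁻¹ * s i / 2) * ∏ j, ((μ - δ • ut i) - μ) (f j))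
          - S f) ^ 2)
      < τ)
    ∧ (Real.sqrt (∑ f : Fin 4 → Fin d,
        (((1 - (d : ℝ) * (β ^ 2)⁻¹ - Lh * (δ ^ 4)⁻¹) * ∏ j, (μ - μ) (f j))
          + (α⁻¹ / 2) * ∏ j, ((μ + α • μh) - μ) (f j)
          + (-(α⁻¹ / 2)) * ∏ j, ((μ - α • μh) - μ) (f j)
          + (∑ i, ((β ^ 2)⁻¹ / 2) * ∏ j, ((μ + β • q i) - μ) (f j))
          + (∑ i, ((β ^ 2)⁻¹ / 2) * ∏ j, ((μ - β • q i) - μ) (f j))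
          + (∑ i, ((γ ^ 3)⁻¹ / 2) * ∏ j, ((μ + γ • vt i) - μ) (f j))
          + (∑ i, (-((γ ^ 3)⁻¹ / 2)) * ∏ j, ((μ - γ • vt i) - μ) (f j))
          + (∑ i, ((δ ^ 4)⁻¹ * s i / 2) * ∏ j, ((μ + δ • ut i) - μ) (f j))
          + (∑ i, ((δ ^ 4)⁻¹ * s i / 2) * ∏ j, ((μ - δ • ut i) - μ) (f j))
          - K f) ^ 2)
      < τ) := by
  subst hCb
  exact ⟨sqrt_sum_sq_sub_lt_of_eq_mul_add (M := sigmaPointMoment α β γ δ μ μh q vt ut s Lh 3)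
      (sigmaPointMoment_three α β γ δ μ μh q vt ut s Lh hγ.ne') (sq_nonneg α)
      ((Real.lt_sqrt hα.le).mp hαsmall) hS,
    sqrt_sum_sq_sub_lt_of_eq_mul_add (M := sigmaPointMoment α β γ δ μ μh q vt ut s Lh 4)
      (sigmaPointMoment_four α β γ δ μ μh q vt ut s Lh hδ.ne') (sq_nonneg β)
      ((Real.lt_sqrt hβ.le).mp hβsmall) hK⟩

/-- HOUT tolerance control: under the approximate rank-1 decompositions of the skewness S
and kurtosis K to tolerance τ/2, if additionally α < sqrt(τ/(2‖μ̂^{⊗3}‖_F)) and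
β < sqrt(τ/(2‖C̄‖_F)) (with ‖μ̂^{⊗3}‖_F, ‖C̄‖_F > 0, C̄ = Σᵢ qᵢ^{⊗4}), then the 4-moment
σ-points match the skewness and kurtosis to within τ in Frobenius norm. -/
theorem hout_skewness_kurtosis_tolerance
    (d J L : ℕ) (α β γ δ : ℝ) (hα : 0 < α) (hβ : 0 < β) (hγ : 0 < γ) (hδ : 0 < δ)
    (μ : Fin d → ℝ) (C : Matrix (Fin d) (Fin d) ℝ)
    (vt : Fin J → Fin d → ℝ) (ut : Fin L → Fin d → ℝ)
    (s : Fin L → ℝ) (hs : ∀ i, s i = 1 ∨ s i = -1)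
    (Ct : Matrix (Fin d) (Fin d) ℝ) (hCt : Ct = ∑ i, s i • Matrix.vecMulVec (ut i) (ut i))
    (Ch : Matrix (Fin d) (Fin d) ℝ) (hCh : Ch = C - (δ ^ 2)⁻¹ • Ct)
    (q : Fin d → Fin d → ℝ) (hq : ∑ i, Matrix.vecMulVec (q i) (q i) = Ch)
    (Lh : ℝ) (hLh : Lh = ∑ i, s i)
    (μt : Fin d → ℝ) (hμt : μt = ∑ i, vt i)
    (μh : Fin d → ℝ) (hμh : μh = -((γ ^ 2)⁻¹ • μt))
    (τ : ℝ) (hτ : 0 < τ)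
    (S : (Fin 3 → Fin d) → ℝ)
    (hS : Real.sqrt (∑ f : Fin 3 → Fin d, (S f - ∑ i, ∏ j, vt i (f j)) ^ 2) ≤ τ / 2)
    (K : (Fin 4 → Fin d) → ℝ)
    (hK : Real.sqrt (∑ f : Fin 4 → Fin d, (K f - ∑ i, s i * ∏ j, ut i (f j)) ^ 2) ≤ τ / 2)
    (Cb : (Fin 4 → Fin d) → ℝ) (hCb : Cb = fun f => ∑ i, ∏ j, q i (f j))
    (hμhpos : 0 < Real.sqrt (∑ f : Fin 3 → Fin d, (∏ j, μh (f j)) ^ 2))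
    (hCbpos : 0 < Real.sqrt (∑ f : Fin 4 → Fin d, (Cb f) ^ 2))
    (hαsmall : α < Real.sqrt (τ / (2 * Real.sqrt (∑ f : Fin 3 → Fin d, (∏ j, μh (f j)) ^ 2))))
    (hβsmall : β < Real.sqrt (τ / (2 * Real.sqrt (∑ f : Fin 4 → Fin d, (Cb f) ^ 2)))) :
    (Real.sqrt (∑ f : Fin 3 → Fin d,
        (((1 - (d : ℝ) * (β ^ 2)⁻¹ - Lh * (δ ^ 4)⁻¹) * ∏ j, (μ - μ) (f j))
          + (α⁻¹ / 2) * ∏ j, ((μ + α • μh) - μ) (f j)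
          + (-(α⁻¹ / 2)) * ∏ j, ((μ - α • μh) - μ) (f j)
          + (∑ i, ((β ^ 2)⁻¹ / 2) * ∏ j, ((μ + β • q i) - μ) (f j))
          + (∑ i, ((β ^ 2)⁻¹ / 2) * ∏ j, ((μ - β • q i) - μ) (f j))
          + (∑ i, ((γ ^ 3)⁻¹ / 2) * ∏ j, ((μ + γ • vt i) - μ) (f j))
          + (∑ i, (-((γ ^ 3)⁻¹ / 2)) * ∏ j, ((μ - γ • vt i) - μ) (f j))
          + (∑ i, ((δ ^ 4)⁻¹ * s i / 2) * ∏ j, ((μ + δ • ut i) - μ) (f j))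
          + (∑ i, ((δ ^ 4)⁻¹ * s i / 2) * ∏ j, ((μ - δ • ut i) - μ) (f j))
          - S f) ^ 2)
      < τ)
    ∧ (Real.sqrt (∑ f : Fin 4 → Fin d,
        (((1 - (d : ℝ) * (β ^ 2)⁻¹ - Lh * (δ ^ 4)⁻¹) * ∏ j, (μ - μ) (f j))
          + (α⁻¹ / 2) * ∏ j, ((μ + α • μh) - μ) (f j)
          + (-(α⁻¹ / 2)) * ∏ j, ((μ - α • μh) - μ) (f j)
          + (∑ i, ((β ^ 2)⁻¹ / 2) * ∏ j, ((μ + β • q i) - μ) (f j))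
          + (∑ i, ((β ^ 2)⁻¹ / 2) * ∏ j, ((μ - β • q i) - μ) (f j))
          + (∑ i, ((γ ^ 3)⁻¹ / 2) * ∏ j, ((μ + γ • vt i) - μ) (f j))
          + (∑ i, (-((γ ^ 3)⁻¹ / 2)) * ∏ j, ((μ - γ • vt i) - μ) (f j))
          + (∑ i, ((δ ^ 4)⁻¹ * s i / 2) * ∏ j, ((μ + δ • ut i) - μ) (f j))
          + (∑ i, ((δ ^ 4)⁻¹ * s i / 2) * ∏ j, ((μ - δ • ut i) - μ) (f j))
          - K f) ^ 2)
      < τ) :=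
  hout_skewness_kurtosis_tolerance_general d J L α β γ δ hα hβ hγ hδ μ vt ut s q Lh μh τ S hS K hK
    Cb hCb hαsmall hβsmall
end
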